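/- arXiv:1804.06165 — 4 statements merged into one kernel-verified Lean document; each statement's English description precedes it below -/
import Mathlib

section
/- Let q ∈ (0,1), a > 0, and let p, r be real-valued functions on [0,a]. If y = (y₁, y₂) and z = (z₁, z₂) are eigenfunctions of the q-Dirac boundary value problem corresponding to distinct eigenvalues λ₁ ≠ λ₂, then ∫₀ᵃ ( y₁(x)z₁(x) + y₂(x)z₂(x) ) d_q x = 0, i.e. the eigenfunctions are orthogonal in the q-integral inner product. -/
open Filter

/-- The `q`-difference operator `D_q` on complex-valued functions of a real variable:
`D_q f(x) = (f(x) - f(qx))/(x(1-q))` for `x ≠ 0`, and at `x = 0` it is the limit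
`lim_{n→∞} (f(q^n) - f(0))/q^n` (the definition requires this limit to be
independent of the base point, so the base point `1` is used). -/
noncomputable def qDq (q : ℝ) (f : ℝ → ℂ) (x : ℝ) : ℂ :=
  if x = 0 then
    limUnder atTop (fun n : ℕ => (f (q ^ n) - f 0) / ((q : ℂ) ^ n))
  else
    (f x - f (q * x)) / ((x : ℂ) * (1 - (q : ℂ)))

/-- The operator `D_{q⁻¹}`: `D_{q⁻¹} f(x) = (f(x) - f(q⁻¹x))/(x(1-q⁻¹))` for `x ≠ 0`,
and `D_q f(0)` at `x = 0`. -/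
noncomputable def qDqInv (q : ℝ) (f : ℝ → ℂ) (x : ℝ) : ℂ :=
  if x = 0 then qDq q f 0
  else (f x - f (x / q)) / ((x : ℂ) * (1 - (q : ℂ)⁻¹))

/-- Jackson `q`-integral `∫₀ˣ f(t) d_q t = x(1-q) ∑_{n=0}^∞ qⁿ f(xqⁿ)`. -/
noncomputable def qIntegral (q : ℝ) (f : ℝ → ℂ) (x : ℝ) : ℂ :=
  ((x : ℂ) * (1 - (q : ℂ))) * ∑' n : ℕ, (q : ℂ) ^ n * f (x * q ^ n)

/-- The `q`-geometric set `{a qⁿ : n ∈ ℕ} ∪ {0}`. -/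
def qGeomSet (q a : ℝ) : Set ℝ := {x : ℝ | ∃ n : ℕ, x = a * q ^ n} ∪ {0}

/-- `f` is `q`-regular at zero: `lim_{n→∞} f(xqⁿ) = f(0)` for all `x`. -/
def QRegularAtZero (q : ℝ) (f : ℝ → ℂ) : Prop :=
  ∀ x : ℝ, Tendsto (fun n : ℕ => f (x * q ^ n)) atTop (nhds (f 0))

/-- The pair `(y₁, y₂)` solves the `q`-Dirac system with potential `(p, r)` and
spectral parameter `lam` at every point of `S`:
`-(1/q) D_{q⁻¹} y₂(x) + p(x) y₁(x) = λ y₁(x)` and `D_q y₁(x) + r(x) y₂(x) = λ y₂(x)`. -/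
def SolvesQDirac (q : ℝ) (p r : ℝ → ℝ) (lam : ℂ) (y₁ y₂ : ℝ → ℂ) (S : Set ℝ) : Prop :=
  ∀ x ∈ S,
    -(1 / (q : ℂ)) * qDqInv q y₂ x + (p x : ℂ) * y₁ x = lam * y₁ x ∧
    qDq q y₁ x + (r x : ℂ) * y₂ x = lam * y₂ x

/-- `f ∈ L¹_q(0,a)`: the Jackson `q`-integral `∫₀ᵃ |f(t)| d_q t` is finite, i.e. the
defining series converges. -/
def MemL1q (q a : ℝ) (f : ℝ → ℝ) : Prop := Summable (fun n : ℕ => q ^ n * |f (a * q ^ n)|)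

/-- `(y₁, y₂)` is an eigenfunction of the `q`-Dirac boundary value problem on `[0,a]`
with eigenvalue `lam`: it solves the system on the `q`-geometric set, is `q`-regular
at zero, satisfies both boundary conditions, and is nontrivial. -/
def IsQDiracEigenpair (q a : ℝ) (p r : ℝ → ℝ) (k₁₁ k₁₂ k₂₁ k₂₂ : ℝ) (lam : ℂ)
    (y₁ y₂ : ℝ → ℂ) : Prop :=
  SolvesQDirac q p r lam y₁ y₂ (qGeomSet q a) ∧
  QRegularAtZero q y₁ ∧ QRegularAtZero q y₂ ∧
  (k₁₁ : ℂ) * y₁ 0 + (k₁₂ : ℂ) * y₂ 0 = 0 ∧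
  (k₂₁ : ℂ) * y₁ a + (k₂₂ : ℂ) * y₂ (a / q) = 0 ∧
  ¬ (∀ x ∈ qGeomSet q a, y₁ x = 0 ∧ y₂ x = 0)

lemma qd_det_aux (k₁ k₂ : ℝ) (hk : (k₁, k₂) ≠ (0, 0)) (u₁ u₂ v₁ v₂ : ℂ)
    (hu : (k₁:ℂ) * u₁ + (k₂:ℂ) * u₂ = 0) (hv : (k₁:ℂ) * v₁ + (k₂:ℂ) * v₂ = 0) :
    u₁ * v₂ - v₁ * u₂ = 0 := by
  have hk' : k₁ ≠ 0 ∨ k₂ ≠ 0 := by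
    by_contra h
    push_neg at h
    exact hk (by simp [Prod.ext_iff, h.1, h.2])
  rcases hk' with h | h
  · have hkc : (k₁:ℂ) ≠ 0 := Complex.ofReal_ne_zero.mpr h
    have h0 : (k₁:ℂ) * (u₁ * v₂ - v₁ * u₂) = 0 := by linear_combination v₂ * hu - u₂ * hv
    exact (mul_eq_zero.mp h0).resolve_left hkc
  · have hkc : (k₂:ℂ) ≠ 0 := Complex.ofReal_ne_zero.mpr h
    have h0 : (k₂:ℂ) * (u₁ * v₂ - v₁ * u₂) = 0 := by linear_combination u₁ * hv - v₁ * hu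
    exact (mul_eq_zero.mp h0).resolve_left hkc

lemma qd_telescope_tsum (F g : ℕ → ℂ) (A : ℂ) (hA : A ≠ 0)
    (hkey : ∀ n, A * g n = F n - F (n + 1)) (hF0 : F 0 = 0)
    (hFlim : Tendsto F atTop (nhds 0)) : ∑' n, g n = 0 := by
  by_cases hs : Summable g
  · have hps := hs.hasSum.tendsto_sum_nat
    have h2 : ∀ N, ∑ n ∈ Finset.range N, g n = A⁻¹ * (0 - F N) := by
      intro N
      have h3 : ∑ n ∈ Finset.range N, (F n - F (n + 1)) = F 0 - F N :=
        Finset.sum_range_sub' F N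
      have h4 : A * ∑ n ∈ Finset.range N, g n = F 0 - F N := by
        rw [Finset.mul_sum, ← h3]
        exact Finset.sum_congr rfl fun n _ => hkey n
      rw [hF0] at h4
      rw [← h4, inv_mul_cancel_left₀ hA]
    have hps2 : Tendsto (fun N => A⁻¹ * (0 - F N)) atTop (nhds (A⁻¹ * (0 - 0))) :=
      (tendsto_const_nhds.sub hFlim).const_mul _
    simp only [sub_zero, mul_zero] at hps2
    exact tendsto_nhds_unique (hps.congr h2) hps2
  · exact tsum_eq_zero_of_not_summable hs

/-- Lemma 3.1: eigenfunctions of the `q`-Dirac boundary value problem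
corresponding to distinct eigenvalues `λ₁ ≠ λ₂` are orthogonal:
`∫₀ᵃ (y₁ z₁ + y₂ z₂) d_q x = 0`. -/
theorem qDirac_eigenfunctions_orthogonal (q a : ℝ) (hq0 : 0 < q) (hq1 : q < 1) (ha : 0 < a)
    (p r : ℝ → ℝ) (k₁₁ k₁₂ k₂₁ k₂₂ : ℝ)
    (hk1 : (k₁₁, k₁₂) ≠ (0, 0)) (hk2 : (k₂₁, k₂₂) ≠ (0, 0))
    (lam₁ lam₂ : ℂ) (y₁ y₂ z₁ z₂ : ℝ → ℂ)
    (hy : IsQDiracEigenpair q a p r k₁₁ k₁₂ k₂₁ k₂₂ lam₁ y₁ y₂)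
    (hz : IsQDiracEigenpair q a p r k₁₁ k₁₂ k₂₁ k₂₂ lam₂ z₁ z₂)
    (hne : lam₁ ≠ lam₂) :
    qIntegral q (fun x => y₁ x * z₁ x + y₂ x * z₂ x) a = 0 := by
  obtain ⟨hsolY, hregY1, hregY2, hbcY0, hbcYa, -⟩ := hy
  obtain ⟨hsolZ, hregZ1, hregZ2, hbcZ0, hbcZa, -⟩ := hz
  have hqne : q ≠ 0 := ne_of_gt hq0
  have hqC : (q:ℂ) ≠ 0 := Complex.ofReal_ne_zero.mpr hqne
  have hq1R : q ≠ 1 := ne_of_lt hq1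
  have hq1C : (q:ℂ) ≠ 1 := by exact_mod_cast hq1R
  have h1q : (1:ℂ) - (q:ℂ) ≠ 0 := sub_ne_zero.mpr (Ne.symm hq1C)
  have h1q' : (q:ℂ) - 1 ≠ 0 := sub_ne_zero.mpr hq1C
  have haC : (a:ℂ) ≠ 0 := Complex.ofReal_ne_zero.mpr (ne_of_gt ha)
  set A : ℂ := (lam₁ - lam₂) * ((a:ℂ) * (1 - (q:ℂ))) with hAdef
  have hA : A ≠ 0 := mul_ne_zero (sub_ne_zero.mpr hne) (mul_ne_zero haC h1q)
  -- key telescoping identity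
  have hkey : ∀ n : ℕ,
      A * ((q:ℂ) ^ n * (y₁ (a * q ^ n) * z₁ (a * q ^ n) + y₂ (a * q ^ n) * z₂ (a * q ^ n)))
        = (y₁ (a * q ^ n) * z₂ (a * q ^ n / q) - z₁ (a * q ^ n) * y₂ (a * q ^ n / q))
          - (y₁ (a * q ^ (n + 1)) * z₂ (a * q ^ (n + 1) / q)
             - z₁ (a * q ^ (n + 1)) * y₂ (a * q ^ (n + 1) / q)) := by
    intro n
    have hx0 : a * q ^ n ≠ 0 := by positivity
    have hxS : a * q ^ n ∈ qGeomSet q a := Or.inl ⟨n, rfl⟩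
    have hXC : ((a * q ^ n : ℝ) : ℂ) ≠ 0 := Complex.ofReal_ne_zero.mpr hx0
    have hden : ((a * q ^ n : ℝ) : ℂ) * (1 - (q:ℂ)) ≠ 0 := mul_ne_zero hXC h1q
    have hqp : (q:ℂ) ^ n ≠ 0 := pow_ne_zero _ hqC
    obtain ⟨h1y, h2y⟩ := hsolY _ hxS
    obtain ⟨h1z, h2z⟩ := hsolZ _ hxS
    rw [qDqInv, if_neg hx0] at h1y h1z
    rw [qDq, if_neg hx0] at h2y h2z
    have hXcast : ((a * q ^ n : ℝ) : ℂ) = (a:ℂ) * (q:ℂ) ^ n := by push_cast; ring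
    rw [hXcast] at h1y h1z h2y h2z
    have hdenP : (a:ℂ) * (q:ℂ) ^ n * (1 - (q:ℂ)) ≠ 0 :=
      mul_ne_zero (mul_ne_zero haC hqp) h1q
    have e1y : y₂ (a * q ^ n) - y₂ (a * q ^ n / q)
        = (lam₁ - (p (a * q ^ n) : ℂ)) * y₁ (a * q ^ n) * ((a:ℂ) * (q:ℂ) ^ n * (1 - (q:ℂ))) := by
      apply mul_left_cancel₀ hqC
      field_simp at h1y
      linear_combination -(q:ℂ) * h1y
    have e1z : z₂ (a * q ^ n) - z₂ (a * q ^ n / q)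
        = (lam₂ - (p (a * q ^ n) : ℂ)) * z₁ (a * q ^ n) * ((a:ℂ) * (q:ℂ) ^ n * (1 - (q:ℂ))) := by
      apply mul_left_cancel₀ hqC
      field_simp at h1z
      linear_combination -(q:ℂ) * h1z
    have e2y : y₁ (a * q ^ n) - y₁ (q * (a * q ^ n))
        = (lam₁ - (r (a * q ^ n) : ℂ)) * y₂ (a * q ^ n) * ((a:ℂ) * (q:ℂ) ^ n * (1 - (q:ℂ))) := by
      have h' : (y₁ (a * q ^ n) - y₁ (q * (a * q ^ n))) / ((a:ℂ) * (q:ℂ) ^ n * (1 - (q:ℂ)))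
          = (lam₁ - (r (a * q ^ n) : ℂ)) * y₂ (a * q ^ n) := by linear_combination h2y
      rw [div_eq_iff hdenP] at h'
      linear_combination h'
    have e2z : z₁ (a * q ^ n) - z₁ (q * (a * q ^ n))
        = (lam₂ - (r (a * q ^ n) : ℂ)) * z₂ (a * q ^ n) * ((a:ℂ) * (q:ℂ) ^ n * (1 - (q:ℂ))) := by
      have h' : (z₁ (a * q ^ n) - z₁ (q * (a * q ^ n))) / ((a:ℂ) * (q:ℂ) ^ n * (1 - (q:ℂ)))
          = (lam₂ - (r (a * q ^ n) : ℂ)) * z₂ (a * q ^ n) := by linear_combination h2z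
      rw [div_eq_iff hdenP] at h'
      linear_combination h'
    have harg2 : a * q ^ (n + 1) / q = a * q ^ n := by
      field_simp
      ring
    have harg1 : a * q ^ (n + 1) = q * (a * q ^ n) := by ring
    rw [harg2, harg1, hAdef]
    linear_combination y₁ (a * q ^ n) * e1z - z₁ (a * q ^ n) * e1y
      + y₂ (a * q ^ n) * e2z - z₂ (a * q ^ n) * e2y
  -- boundary term at x = a
  have hF0 : (y₁ (a * q ^ 0) * z₂ (a * q ^ 0 / q) - z₁ (a * q ^ 0) * y₂ (a * q ^ 0 / q)) = 0 := by
    rw [pow_zero, mul_one]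
    exact qd_det_aux k₂₁ k₂₂ hk2 (y₁ a) (y₂ (a / q)) (z₁ a) (z₂ (a / q)) hbcYa hbcZa
  -- boundary term at 0
  have hdet0 : y₁ 0 * z₂ 0 - z₁ 0 * y₂ 0 = 0 :=
    qd_det_aux k₁₁ k₁₂ hk1 (y₁ 0) (y₂ 0) (z₁ 0) (z₂ 0) hbcY0 hbcZ0
  have harg : ∀ n : ℕ, a * q ^ n / q = (a / q) * q ^ n := fun n => by
    field_simp
  have hFlim : Tendsto (fun n : ℕ =>
      y₁ (a * q ^ n) * z₂ (a * q ^ n / q) - z₁ (a * q ^ n) * y₂ (a * q ^ n / q))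
      atTop (nhds 0) := by
    have h1 : Tendsto (fun n : ℕ => y₁ (a * q ^ n)) atTop (nhds (y₁ 0)) := hregY1 a
    have h3 : Tendsto (fun n : ℕ => z₁ (a * q ^ n)) atTop (nhds (z₁ 0)) := hregZ1 a
    have h2 : Tendsto (fun n : ℕ => z₂ (a * q ^ n / q)) atTop (nhds (z₂ 0)) :=
      (hregZ2 (a / q)).congr fun n => by rw [harg n]
    have h4 : Tendsto (fun n : ℕ => y₂ (a * q ^ n / q)) atTop (nhds (y₂ 0)) :=
      (hregY2 (a / q)).congr fun n => by rw [harg n]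
    have := (h1.mul h2).sub (h3.mul h4)
    rwa [hdet0] at this
  have htsum : ∑' n : ℕ, (q:ℂ) ^ n *
      ((fun x => y₁ x * z₁ x + y₂ x * z₂ x) (a * q ^ n)) = 0 :=
    qd_telescope_tsum
      (fun n => y₁ (a * q ^ n) * z₂ (a * q ^ n / q) - z₁ (a * q ^ n) * y₂ (a * q ^ n / q))
      (fun n => (q:ℂ) ^ n * (y₁ (a * q ^ n) * z₁ (a * q ^ n) + y₂ (a * q ^ n) * z₂ (a * q ^ n)))
      A hA hkey hF0 hFlim
  rw [qIntegral, htsum, mul_zero]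
end

section
/- Let q ∈ (0,1), a > 0, and let p, r be real-valued functions on [0,a]. Every eigenvalue of the q-Dirac boundary value problem is real. -/
open Filter

private lemma bd_im (k₁ k₂ : ℝ) (z w : ℂ) (hk : (k₁, k₂) ≠ (0,0))
    (h : (k₁:ℂ)*z + (k₂:ℂ)*w = 0) : (z * (starRingEnd ℂ) w).im = 0 := by
  have h1 : (k₁:ℂ) * (z * (starRingEnd ℂ) w) = -(k₂:ℂ) * ↑(Complex.normSq w) := by
    rw [← Complex.mul_conj]
    linear_combination (starRingEnd ℂ) w * h
  have hc := congrArg (starRingEnd ℂ) h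
  simp only [map_add, map_mul, Complex.conj_ofReal, map_zero] at hc
  have h2 : (k₂:ℂ) * (z * (starRingEnd ℂ) w) = -(k₁:ℂ) * ↑(Complex.normSq z) := by
    rw [← Complex.mul_conj]
    linear_combination z * hc
  have i1 : k₁ * (z * (starRingEnd ℂ) w).im = 0 := by
    have := congrArg Complex.im h1; simpa using this
  have i2 : k₂ * (z * (starRingEnd ℂ) w).im = 0 := by
    have := congrArg Complex.im h2; simpa using this
  have hor : k₁ ≠ 0 ∨ k₂ ≠ 0 := by
    by_contra hcon
    push_neg at hcon
    exact hk (by simp [Prod.ext_iff, hcon.1, hcon.2])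
  rcases hor with h | h
  · exact (mul_eq_zero.mp i1).resolve_left h
  · exact (mul_eq_zero.mp i2).resolve_left h


/-- Lemma 3.2: every eigenvalue of the `q`-Dirac boundary value
problem is real. -/
theorem qDirac_eigenvalues_real (q a : ℝ) (hq0 : 0 < q) (hq1 : q < 1) (ha : 0 < a)
    (p r : ℝ → ℝ) (k₁₁ k₁₂ k₂₁ k₂₂ : ℝ)
    (hk1 : (k₁₁, k₁₂) ≠ (0, 0)) (hk2 : (k₂₁, k₂₂) ≠ (0, 0))
    (lam : ℂ)
    (hlam : ∃ y₁ y₂ : ℝ → ℂ, IsQDiracEigenpair q a p r k₁₁ k₁₂ k₂₁ k₂₂ lam y₁ y₂) :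
    lam.im = 0 := by
  obtain ⟨y₁, y₂, hsol, hreg₁, hreg₂, hbc0, hbca, hnt⟩ := hlam
  by_contra him
  have hqR : (q:ℝ) ≠ 0 := ne_of_gt hq0
  have hqC : (q:ℂ) ≠ 0 := by exact_mod_cast hqR
  have hqne1 : (q:ℂ) ≠ 1 := by exact_mod_cast ne_of_lt hq1
  have hq1C : (1 : ℂ) - (q:ℂ) ≠ 0 := sub_ne_zero.mpr (Ne.symm hqne1)
  have hq1C' : (q:ℂ) - 1 ≠ 0 := sub_ne_zero.mpr hqne1
  have hxpos : ∀ n : ℕ, 0 < a * q ^ n := fun n => mul_pos ha (pow_pos hq0 n)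
  have hxne : ∀ n : ℕ, a * q ^ n ≠ 0 := fun n => ne_of_gt (hxpos n)
  have hwpos : ∀ n : ℕ, 0 < a * q ^ n * (1 - q) :=
    fun n => mul_pos (hxpos n) (by linarith)
  set F : ℕ → ℝ := fun n => (y₁ (a * q ^ n) * (starRingEnd ℂ) (y₂ (a * q ^ n / q))).im with hF
  set g : ℕ → ℝ := fun n =>
    (Complex.normSq (y₁ (a * q ^ n)) + Complex.normSq (y₂ (a * q ^ n))) * (a * q ^ n * (1 - q))
    with hg
  have hgnn : ∀ n, 0 ≤ g n := fun n =>
    mul_nonneg (add_nonneg (Complex.normSq_nonneg _) (Complex.normSq_nonneg _)) (hwpos n).le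
  -- the per-step identity
  have step : ∀ n : ℕ, F n - F (n + 1) = lam.im * g n := by
    intro n
    have hmem : (a * q ^ n) ∈ qGeomSet q a := Or.inl ⟨n, rfl⟩
    obtain ⟨eq1, eq2⟩ := hsol _ hmem
    rw [qDqInv, if_neg (hxne n)] at eq1
    rw [qDq, if_neg (hxne n)] at eq2
    set x : ℝ := a * q ^ n with hx
    have hxC : (x:ℂ) ≠ 0 := by exact_mod_cast hxne n
    set u : ℂ := y₁ x
    set u' : ℂ := y₁ (q * x)
    set v : ℂ := y₂ x
    set v' : ℂ := y₂ (x / q)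
    have e1 : v - v' = (lam - (p x : ℂ)) * u * ((x:ℂ) * (1 - (q:ℂ))) := by
      have h := eq1
      field_simp [hq1C'] at h
      exact mul_left_cancel₀ hqC (by linear_combination -(q:ℂ) * h)
    have e2 : u - u' = (lam - (r x : ℂ)) * v * ((x:ℂ) * (1 - (q:ℂ))) := by
      have h := eq2
      field_simp [hq1C] at h
      linear_combination h
    have key : (v - v') * (starRingEnd ℂ) u + (u - u') * (starRingEnd ℂ) v
        = ((lam - (p x : ℂ)) * ↑(Complex.normSq u) + (lam - (r x : ℂ)) * ↑(Complex.normSq v))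
          * ((x:ℂ) * (1 - (q:ℂ))) := by
      rw [← Complex.mul_conj, ← Complex.mul_conj]
      linear_combination (starRingEnd ℂ) u * e1 + (starRingEnd ℂ) v * e2
    have him' := congrArg Complex.im key
    have hFn1 : F (n + 1) = (u' * (starRingEnd ℂ) v).im := by
      have harg2 : a * q ^ (n + 1) / q = x := by
        rw [hx]; field_simp; ring
      have harg1 : a * q ^ (n + 1) = q * x := by rw [hx]; ring
      simp only [hF]
      rw [harg2, harg1]
    have hFn : F n = (u * (starRingEnd ℂ) v').im := rfl
    rw [hFn, hFn1]
    simp only [Complex.add_im, Complex.add_re, Complex.mul_im, Complex.mul_re,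
      Complex.sub_re, Complex.sub_im, Complex.conj_re, Complex.conj_im,
      Complex.ofReal_re, Complex.ofReal_im, Complex.one_re, Complex.one_im] at him' ⊢
    simp only [hg, ← hx]
    linear_combination him'
  -- telescoping
  have tele : ∀ N : ℕ, ∑ n ∈ Finset.range N, lam.im * g n = F 0 - F N := by
    intro N
    rw [← Finset.sum_range_sub' F N]
    exact Finset.sum_congr rfl fun n _ => (step n).symm
  -- F 0 = 0 via boundary condition at a
  have hF0 : F 0 = 0 := by
    have h1 : a * q ^ 0 = a := by ring
    have := bd_im k₂₁ k₂₂ (y₁ a) (y₂ (a / q)) hk2 hbca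
    simp only [hF, h1]
    exact this
  -- F N → 0
  have hlim0 : (y₁ 0 * (starRingEnd ℂ) (y₂ 0)).im = 0 :=
    bd_im k₁₁ k₁₂ (y₁ 0) (y₂ 0) hk1 hbc0
  have hFtend : Tendsto F atTop (nhds 0) := by
    have h1 := hreg₁ a
    have h2 := hreg₂ (a / q)
    have h2c : Tendsto (fun N : ℕ => (starRingEnd ℂ) (y₂ ((a / q) * q ^ N))) atTop
        (nhds ((starRingEnd ℂ) (y₂ 0))) :=
      (Complex.continuous_conj.tendsto _).comp h2
    have htend := h1.mul h2c
    have himtend := (Complex.continuous_im.tendsto _).comp htend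
    have hFeq : F = fun N : ℕ =>
        (y₁ (a * q ^ N) * (starRingEnd ℂ) (y₂ ((a / q) * q ^ N))).im := by
      funext N
      simp only [hF]
      rw [show a * q ^ N / q = (a / q) * q ^ N by ring]
    rw [hFeq]
    simpa [Function.comp_def, hlim0] using himtend
  -- partial sums of g tend to 0
  have hSt : Tendsto (fun N => ∑ n ∈ Finset.range N, g n) atTop (nhds 0) := by
    have h2 : Tendsto (fun N => lam.im * ∑ n ∈ Finset.range N, g n) atTop (nhds 0) := by
      have heq : (fun N => lam.im * ∑ n ∈ Finset.range N, g n) = fun N => F 0 - F N := by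
        funext N
        rw [← tele N, Finset.mul_sum]
      rw [heq]
      have h := (tendsto_const_nhds (x := F 0) (f := (atTop : Filter ℕ))).sub hFtend
      simpa [hF0] using h
    have h3 := h2.const_mul (lam.im)⁻¹
    rw [mul_zero] at h3
    have : (fun N => (lam.im)⁻¹ * (lam.im * ∑ n ∈ Finset.range N, g n))
        = fun N => ∑ n ∈ Finset.range N, g n := by
      funext N
      rw [inv_mul_cancel_left₀ him]
    rwa [this] at h3
  have hmono : Monotone (fun N => ∑ n ∈ Finset.range N, g n) :=
    monotone_nat_of_le_succ fun N => by
      rw [Finset.sum_range_succ]; linarith [hgnn N]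
  have hTle : ∀ N, ∑ n ∈ Finset.range N, g n ≤ 0 := hmono.ge_of_tendsto hSt
  have hg0 : ∀ n, g n = 0 := by
    intro n
    have h1 : 0 ≤ ∑ m ∈ Finset.range n, g m := Finset.sum_nonneg fun m _ => hgnn m
    have h2 := hTle (n + 1)
    rw [Finset.sum_range_succ] at h2
    linarith [hgnn n]
  have hvan : ∀ n : ℕ, y₁ (a * q ^ n) = 0 ∧ y₂ (a * q ^ n) = 0 := by
    intro n
    have h := hg0 n
    rw [hg, mul_eq_zero] at h
    rcases h with h | h
    · have hn1 := Complex.normSq_nonneg (y₁ (a * q ^ n))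
      have hn2 := Complex.normSq_nonneg (y₂ (a * q ^ n))
      exact ⟨Complex.normSq_eq_zero.mp (by linarith), Complex.normSq_eq_zero.mp (by linarith)⟩
    · exact absurd h (ne_of_gt (hwpos n))
  have hy10 : y₁ 0 = 0 := by
    have h2 : Tendsto (fun n : ℕ => y₁ (a * q ^ n)) atTop (nhds 0) := by
      have : (fun n : ℕ => y₁ (a * q ^ n)) = fun _ => (0 : ℂ) := funext fun n => (hvan n).1
      rw [this]; exact tendsto_const_nhds
    exact tendsto_nhds_unique (hreg₁ a) h2
  have hy20 : y₂ 0 = 0 := by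
    have h2 : Tendsto (fun n : ℕ => y₂ (a * q ^ n)) atTop (nhds 0) := by
      have : (fun n : ℕ => y₂ (a * q ^ n)) = fun _ => (0 : ℂ) := funext fun n => (hvan n).2
      rw [this]; exact tendsto_const_nhds
    exact tendsto_nhds_unique (hreg₂ a) h2
  exact hnt fun x hx => by
    rcases hx with ⟨n, rfl⟩ | hx
    · exact hvan n
    · rw [Set.mem_singleton_iff.mp hx]
      exact ⟨hy10, hy20⟩
end

section
/- Let q ∈ (0,1), a > 0, and let p, r be real-valued functions on [0,a]. Suppose y(x,λ) = (y₁(x,λ), y₂(x,λ)) solves the q-Dirac system for each λ, depends differentiably on λ, and its values and λ-derivatives at x = 0 are independent of λ with ∂y₁/∂λ(0,λ) = ∂y₂/∂λ(0,λ) = 0. Then for all λ: y₂(aq⁻¹,λ) ∂y₁(a,λ)/∂λ − y₁(a,λ) ∂y₂(aq⁻¹,λ)/∂λ = ∫₀ᵃ ( y₁(x,λ)² + y₂(x,λ)² ) d_q x. -/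
open Filter

/-- The `q`-difference operator `D_q` on real-valued functions:
`D_q f(x) = (f(x) - f(qx))/(x(1-q))` for `x ≠ 0`, and at `x = 0` the limit
`lim_{n→∞} (f(q^n) - f(0))/q^n`. -/
noncomputable def qDqR (q : ℝ) (f : ℝ → ℝ) (x : ℝ) : ℝ :=
  if x = 0 then
    limUnder atTop (fun n : ℕ => (f (q ^ n) - f 0) / q ^ n)
  else
    (f x - f (q * x)) / (x * (1 - q))

/-- The operator `D_{q⁻¹}` on real-valued functions. -/
noncomputable def qDqInvR (q : ℝ) (f : ℝ → ℝ) (x : ℝ) : ℝ :=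
  if x = 0 then qDqR q f 0
  else (f x - f (x / q)) / (x * (1 - q⁻¹))

/-- Jackson `q`-integral `∫₀ˣ f(t) d_q t = x(1-q) ∑_{n=0}^∞ qⁿ f(xqⁿ)`. -/
noncomputable def qIntegralR (q : ℝ) (f : ℝ → ℝ) (x : ℝ) : ℝ :=
  (x * (1 - q)) * ∑' n : ℕ, q ^ n * f (x * q ^ n)

/-- `f` is `q`-regular at zero: `lim_{n→∞} f(xqⁿ) = f(0)` for all `x`. -/
def QRegularAtZeroR (q : ℝ) (f : ℝ → ℝ) : Prop :=
  ∀ x : ℝ, Tendsto (fun n : ℕ => f (x * q ^ n)) atTop (nhds (f 0))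

/-- The pair `(y₁, y₂)` of real-valued functions solves the `q`-Dirac system with
real spectral parameter `lam` at every point of `S`. -/
def SolvesQDiracR (q : ℝ) (p r : ℝ → ℝ) (lam : ℝ) (y₁ y₂ : ℝ → ℝ) (S : Set ℝ) : Prop :=
  ∀ x ∈ S,
    -(1 / q) * qDqInvR q y₂ x + p x * y₁ x = lam * y₁ x ∧
    qDqR q y₁ x + r x * y₂ x = lam * y₂ x

namespace QDiracProof

open Real Set Topology

noncomputable def Sterm (q C : ℝ) (U V : ℕ → ℝ → ℝ) (lam mu : ℝ) (n : ℕ) : ℝ :=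
  C * q ^ n * (U n lam * U n mu + V (n+1) lam * V (n+1) mu)

noncomputable def Sdiag (q C : ℝ) (U V : ℕ → ℝ → ℝ) (mu : ℝ) : ℝ :=
  ∑' n, Sterm q C U V mu mu n

def Phi (U V : ℕ → ℝ → ℝ) (n : ℕ) (lam mu : ℝ) : ℝ :=
  V n mu * U n lam - U n mu * V n lam

noncomputable def Wr (U V : ℕ → ℝ → ℝ) (n₀ : ℕ) (lam : ℝ) : ℝ :=
  V n₀ lam * deriv (U n₀) lam - U n₀ lam * deriv (V n₀) lam

structure Setup (q C : ℝ) (U V : ℕ → ℝ → ℝ) (α β : ℝ) (P R : ℕ → ℝ) : Prop where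
  hq0 : 0 < q
  hq1 : q < 1
  hC : 0 < C
  rec1 : ∀ (lam : ℝ) (n : ℕ), V (n+1) lam = V n lam + C * q ^ n * (lam - P n) * U n lam
  rec2 : ∀ (lam : ℝ) (n : ℕ), U (n+1) lam = U n lam - C * q ^ n * (lam - R n) * V (n+1) lam
  limU : ∀ lam : ℝ, Tendsto (fun n => U n lam) atTop (nhds α)
  limV : ∀ lam : ℝ, Tendsto (fun n => V n lam) atTop (nhds β)
  diffU : ∀ n, Differentiable ℝ (U n)
  diffV : ∀ n, Differentiable ℝ (V n)

variable {q C α β : ℝ} {U V : ℕ → ℝ → ℝ} {P R : ℕ → ℝ}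

lemma Setup.bound_exists (S : Setup q C U V α β P R) (lam : ℝ) :
    ∃ M : ℝ, 0 ≤ M ∧ ∀ n, |U n lam| ≤ M ∧ |V n lam| ≤ M := by
  have h1 : Tendsto (fun n => |U n lam|) atTop (nhds |α|) := (S.limU lam).abs
  have h2 : Tendsto (fun n => |V n lam|) atTop (nhds |β|) := (S.limV lam).abs
  obtain ⟨M1, hM1⟩ := h1.bddAbove_range
  obtain ⟨M2, hM2⟩ := h2.bddAbove_range
  refine ⟨max M1 M2, le_trans (abs_nonneg (U 0 lam)) (le_max_of_le_left (hM1 ⟨0, rfl⟩)),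
    fun n => ⟨le_max_of_le_left (hM1 ⟨n, rfl⟩), le_max_of_le_right (hM2 ⟨n, rfl⟩)⟩⟩

lemma Setup.sterm_abs_le (S : Setup q C U V α β P R) {lam mu M1 M2 : ℝ}
    (hM1 : ∀ n, |U n lam| ≤ M1 ∧ |V n lam| ≤ M1)
    (hM2 : ∀ n, |U n mu| ≤ M2 ∧ |V n mu| ≤ M2) (n : ℕ) :
    |Sterm q C U V lam mu n| ≤ C * (2 * M1 * M2) * q ^ n := by
  have hq : (0:ℝ) ≤ q ^ n := pow_nonneg S.hq0.le n
  have hCq : (0:ℝ) ≤ C * q ^ n := mul_nonneg S.hC.le hq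
  have h1 : |U n lam * U n mu + V (n+1) lam * V (n+1) mu| ≤ 2 * M1 * M2 := by
    have t1 : |U n lam * U n mu| ≤ M1 * M2 := by
      rw [abs_mul]
      exact mul_le_mul (hM1 n).1 (hM2 n).1 (abs_nonneg _) ((abs_nonneg _).trans (hM1 n).1)
    have t2 : |V (n+1) lam * V (n+1) mu| ≤ M1 * M2 := by
      rw [abs_mul]
      exact mul_le_mul (hM1 (n+1)).2 (hM2 (n+1)).2 (abs_nonneg _) ((abs_nonneg _).trans (hM1 (n+1)).1)
    calc |U n lam * U n mu + V (n+1) lam * V (n+1) mu|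
        ≤ |U n lam * U n mu| + |V (n+1) lam * V (n+1) mu| := abs_add_le _ _
      _ ≤ M1 * M2 + M1 * M2 := add_le_add t1 t2
      _ = 2 * M1 * M2 := by ring
  calc |Sterm q C U V lam mu n|
      = (C * q ^ n) * |U n lam * U n mu + V (n+1) lam * V (n+1) mu| := by
        rw [Sterm, abs_mul, abs_of_nonneg hCq]
    _ ≤ (C * q ^ n) * (2 * M1 * M2) := mul_le_mul_of_nonneg_left h1 hCq
    _ = C * (2 * M1 * M2) * q ^ n := by ring

lemma Setup.summable_sterm (S : Setup q C U V α β P R) (lam mu : ℝ) :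
    Summable (Sterm q C U V lam mu) := by
  obtain ⟨M1, hM10, hM1⟩ := S.bound_exists lam
  obtain ⟨M2, hM20, hM2⟩ := S.bound_exists mu
  have hg : Summable (fun n : ℕ => (C * (2 * M1 * M2)) * q ^ n) :=
    (summable_geometric_of_lt_one S.hq0.le S.hq1).mul_left _
  exact (Summable.of_nonneg_of_le (fun n => abs_nonneg _)
    (fun n => S.sterm_abs_le hM1 hM2 n) hg).of_abs

lemma Setup.sterm_nonneg (S : Setup q C U V α β P R) (mu : ℝ) (n : ℕ) :
    0 ≤ Sterm q C U V mu mu n := by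
  have h : (0:ℝ) ≤ C * q ^ n := mul_nonneg S.hC.le (pow_nonneg S.hq0.le n)
  have h2 : (0:ℝ) ≤ U n mu * U n mu + V (n+1) mu * V (n+1) mu := add_nonneg (mul_self_nonneg _) (mul_self_nonneg _)
  exact mul_nonneg h h2

lemma Setup.sdiag_nonneg (S : Setup q C U V α β P R) (mu : ℝ) : 0 ≤ Sdiag q C U V mu :=
  tsum_nonneg (S.sterm_nonneg mu)

lemma Setup.step (S : Setup q C U V α β P R) (lam mu : ℝ) (m : ℕ) :
    Phi U V (m+1) lam mu = Phi U V m lam mu - (lam - mu) * Sterm q C U V lam mu m := by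
  simp only [Phi, Sterm, S.rec2 lam m, S.rec2 mu m, S.rec1 lam m, S.rec1 mu m]
  ring

lemma Setup.telescoping (S : Setup q C U V α β P R) (lam mu : ℝ) (n₀ : ℕ) :
    ∀ k : ℕ, Phi U V (n₀ + k) lam mu
      = Phi U V n₀ lam mu - (lam - mu) * ∑ n ∈ Finset.range k, Sterm q C U V lam mu (n + n₀) := by
  intro k
  induction k with
  | zero => simp
  | succ k ih =>
    rw [Finset.sum_range_succ, show n₀ + (k+1) = (n₀ + k) + 1 from rfl,
      S.step lam mu (n₀ + k), ih, show k + n₀ = n₀ + k from Nat.add_comm _ _]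
    ring

lemma Setup.phi_tendsto (S : Setup q C U V α β P R) (lam mu : ℝ) :
    Tendsto (fun N => Phi U V N lam mu) atTop (nhds 0) := by
  have h : Tendsto (fun N => V N mu * U N lam - U N mu * V N lam) atTop
      (nhds (β * α - α * β)) :=
    ((S.limV mu).mul (S.limU lam)).sub ((S.limU mu).mul (S.limV lam))
  simpa [Phi, mul_comm] using h

lemma Setup.summable_shift (S : Setup q C U V α β P R) (lam mu : ℝ) (n₀ : ℕ) :
    Summable (fun n => Sterm q C U V lam mu (n + n₀)) :=
  ((S.summable_sterm lam mu).comp_injective (add_left_injective n₀))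

/-- Key series identity : `(lam - mu) * ∑_{n ≥ n₀} Sterm = Phi n₀ lam mu`. -/
lemma Setup.tsum_tail_eq (S : Setup q C U V α β P R) (lam mu : ℝ) (n₀ : ℕ) :
    (lam - mu) * ∑' n, Sterm q C U V lam mu (n + n₀) = Phi U V n₀ lam mu := by
  have hsum := S.summable_shift lam mu n₀
  have h1 : Tendsto (fun k => ∑ n ∈ Finset.range k, Sterm q C U V lam mu (n + n₀)) atTop
      (nhds (∑' n, Sterm q C U V lam mu (n + n₀))) := hsum.hasSum.tendsto_sum_nat
  have h2 : Tendsto (fun k => Phi U V (n₀ + k) lam mu) atTop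
      (nhds (Phi U V n₀ lam mu - (lam - mu) * ∑' n, Sterm q C U V lam mu (n + n₀))) := by
    have := (tendsto_const_nhds (x := Phi U V n₀ lam mu) (f := atTop (α := ℕ))).sub
      ((tendsto_const_nhds (x := lam - mu) (f := atTop (α := ℕ))).mul h1)
    refine Tendsto.congr (fun k => ?_) this
    exact (S.telescoping lam mu n₀ k).symm
  have h3 : Tendsto (fun k => Phi U V (n₀ + k) lam mu) atTop (nhds 0) := by
    have := (S.phi_tendsto lam mu).comp (tendsto_add_atTop_nat n₀)
    refine Tendsto.congr (fun k => ?_) this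
    simp [Function.comp, Nat.add_comm]
  have := tendsto_nhds_unique h3 h2
  linarith

lemma Setup.slope_tendsto (S : Setup q C U V α β P R) (lam : ℝ) (n₀ : ℕ) :
    Tendsto (fun mu => Phi U V n₀ lam mu / (lam - mu)) (nhdsWithin lam {x | x ≠ lam})
      (nhds (Wr U V n₀ lam)) := by
  have hg : HasDerivAt (fun mu => Phi U V n₀ lam mu)
      (deriv (V n₀) lam * U n₀ lam - deriv (U n₀) lam * V n₀ lam) lam := by
    have h1 : HasDerivAt (V n₀) (deriv (V n₀) lam) lam :=
      ((S.diffV n₀) lam).hasDerivAt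
    have h2 : HasDerivAt (U n₀) (deriv (U n₀) lam) lam :=
      ((S.diffU n₀) lam).hasDerivAt
    exact (h1.mul_const (U n₀ lam)).sub (h2.mul_const (V n₀ lam))
  have hs := hasDerivAt_iff_tendsto_slope.mp hg
  have heq : ∀ mu : ℝ, -(slope (fun mu => Phi U V n₀ lam mu) lam mu)
      = Phi U V n₀ lam mu / (lam - mu) := by
    intro mu
    rw [slope_def_field]
    have : Phi U V n₀ lam lam = 0 := by simp [Phi]; ring
    rw [this, sub_zero, show lam - mu = -(mu - lam) by ring, div_neg]
  have := hs.neg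
  rw [show -(deriv (V n₀) lam * U n₀ lam - deriv (U n₀) lam * V n₀ lam) = Wr U V n₀ lam by
    rw [Wr]; ring] at this
  exact Tendsto.congr heq this

lemma sqrt_pow_eq (x : ℝ) (hx : 0 ≤ x) (m : ℕ) : Real.sqrt (x ^ m) = (Real.sqrt x) ^ m := by
  induction m with
  | zero => simp
  | succ m ih => rw [pow_succ, pow_succ, Real.sqrt_mul (pow_nonneg hx m), ih]

/-- `lam` is a good point: there is a sequence approaching it (within the punctured
neighbourhood) along which the diagonal sums stay bounded. -/
def Good (q C : ℝ) (U V : ℕ → ℝ → ℝ) (lam : ℝ) : Prop :=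
  ∃ x : ℕ → ℝ, Tendsto x atTop (nhdsWithin lam {y | y ≠ lam}) ∧
    ∃ B : ℝ, ∀ k, Sdiag q C U V (x k) ≤ B

lemma Setup.term_le_sdiag_U (S : Setup q C U V α β P R) (mu : ℝ) (m : ℕ) :
    C * q ^ m * (U m mu)^2 ≤ Sdiag q C U V mu := by
  have h1 : C * q ^ m * (U m mu)^2 ≤ Sterm q C U V mu mu m := by
    rw [Sterm, sq]
    nlinarith [mul_self_nonneg (V (m+1) mu), mul_nonneg S.hC.le (pow_nonneg S.hq0.le m)]
  exact h1.trans (Summable.le_tsum (S.summable_sterm mu mu) m (fun j _ => S.sterm_nonneg mu j))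

lemma Setup.term_le_sdiag_V (S : Setup q C U V α β P R) (mu : ℝ) (m : ℕ) :
    C * q ^ m * (V (m+1) mu)^2 ≤ Sdiag q C U V mu := by
  have h1 : C * q ^ m * (V (m+1) mu)^2 ≤ Sterm q C U V mu mu m := by
    rw [Sterm, sq]
    nlinarith [mul_self_nonneg (U m mu), mul_nonneg S.hC.le (pow_nonneg S.hq0.le m)]
  exact h1.trans (Summable.le_tsum (S.summable_sterm mu mu) m (fun j _ => S.sterm_nonneg mu j))

lemma Setup.abs_le_of_sdiag (S : Setup q C U V α β P R) {mu B : ℝ} (hB : Sdiag q C U V mu ≤ B)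
    (m : ℕ) : |U m mu| ≤ Real.sqrt (B / (C * q ^ m)) ∧
      |V (m+1) mu| ≤ Real.sqrt (B / (C * q ^ m)) := by
  have hCq : (0:ℝ) < C * q ^ m := mul_pos S.hC (pow_pos S.hq0 m)
  constructor
  · have h : (U m mu)^2 ≤ B / (C * q ^ m) := by
      rw [le_div_iff₀ hCq]; nlinarith [S.term_le_sdiag_U mu m]
    calc |U m mu| = Real.sqrt ((U m mu)^2) := (Real.sqrt_sq_eq_abs _).symm
      _ ≤ _ := Real.sqrt_le_sqrt h
  · have h : (V (m+1) mu)^2 ≤ B / (C * q ^ m) := by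
      rw [le_div_iff₀ hCq]; nlinarith [S.term_le_sdiag_V mu m]
    calc |V (m+1) mu| = Real.sqrt ((V (m+1) mu)^2) := (Real.sqrt_sq_eq_abs _).symm
      _ ≤ _ := Real.sqrt_le_sqrt h

lemma Setup.sterm_abs_le_of_sdiag (S : Setup q C U V α β P R) {lam mu B M : ℝ} (hM0 : 0 ≤ M)
    (hM : ∀ n, |U n lam| ≤ M ∧ |V n lam| ≤ M)
    (hB : Sdiag q C U V mu ≤ B) (m : ℕ) :
    |Sterm q C U V lam mu m| ≤ 2 * M * Real.sqrt (B * C) * (Real.sqrt q) ^ m := by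
  have hCq : (0:ℝ) < C * q ^ m := mul_pos S.hC (pow_pos S.hq0 m)
  have hB0 : (0:ℝ) ≤ B := le_trans (S.sdiag_nonneg mu) hB
  obtain ⟨hu, hv⟩ := S.abs_le_of_sdiag hB m
  have key : C * q ^ m * Real.sqrt (B / (C * q ^ m)) = Real.sqrt (B * C) * (Real.sqrt q) ^ m := by
    rw [Real.sqrt_div hB0]
    calc C * q ^ m * (Real.sqrt B / Real.sqrt (C * q ^ m))
        = Real.sqrt B * ((C * q ^ m) / Real.sqrt (C * q ^ m)) := by ring
      _ = Real.sqrt B * Real.sqrt (C * q ^ m) := by rw [Real.div_sqrt]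
      _ = Real.sqrt B * (Real.sqrt C * (Real.sqrt q) ^ m) := by
          rw [Real.sqrt_mul S.hC.le, sqrt_pow_eq q S.hq0.le]
      _ = Real.sqrt (B * C) * (Real.sqrt q) ^ m := by rw [Real.sqrt_mul hB0]; ring
  calc |Sterm q C U V lam mu m|
      = (C * q ^ m) * |U m lam * U m mu + V (m+1) lam * V (m+1) mu| := by
        rw [Sterm, abs_mul, abs_of_nonneg hCq.le]
    _ ≤ (C * q ^ m) * (|U m lam| * |U m mu| + |V (m+1) lam| * |V (m+1) mu|) := by
        refine mul_le_mul_of_nonneg_left ((abs_add_le _ _).trans ?_) hCq.le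
        simp [abs_mul, le_refl]
    _ ≤ (C * q ^ m) * (M * Real.sqrt (B / (C * q ^ m)) + M * Real.sqrt (B / (C * q ^ m))) := by
        refine mul_le_mul_of_nonneg_left (add_le_add ?_ ?_) hCq.le
        · exact mul_le_mul (hM m).1 hu (abs_nonneg _) hM0
        · exact mul_le_mul (hM (m+1)).2 hv (abs_nonneg _) hM0
    _ = 2 * M * (C * q ^ m * Real.sqrt (B / (C * q ^ m))) := by ring
    _ = 2 * M * Real.sqrt (B * C) * (Real.sqrt q) ^ m := by rw [key]; ring

/-- At a good point the tail sums equal the Wronskians. -/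
lemma Setup.good_eq (S : Setup q C U V α β P R) {lam : ℝ} (h : Good q C U V lam) (n₀ : ℕ) :
    ∑' n, Sterm q C U V lam lam (n + n₀) = Wr U V n₀ lam := by
  obtain ⟨x, hx, B, hB⟩ := h
  obtain ⟨M, hM0, hM⟩ := S.bound_exists lam
  have hxlam : Tendsto x atTop (nhds lam) := hx.mono_right nhdsWithin_le_nhds
  -- dominated convergence
  have hsq1 : (0:ℝ) ≤ Real.sqrt q := Real.sqrt_nonneg q
  have hsq2 : Real.sqrt q < 1 := by
    have := Real.sqrt_lt_sqrt S.hq0.le S.hq1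
    simpa using this
  have hbound : Summable (fun n : ℕ => (2 * M * Real.sqrt (B * C) * (Real.sqrt q) ^ n₀)
      * (Real.sqrt q) ^ n) := (summable_geometric_of_lt_one hsq1 hsq2 |>.mul_left _)
  have hDCT : Tendsto (fun k => ∑' n, Sterm q C U V lam (x k) (n + n₀)) atTop
      (nhds (∑' n, Sterm q C U V lam lam (n + n₀))) := by
    refine tendsto_tsum_of_dominated_convergence hbound (fun n => ?_) ?_
    · -- pointwise convergence in k
      have hc : Continuous (fun mu => Sterm q C U V lam mu (n + n₀)) := by
        have h1 := (S.diffU (n + n₀)).continuous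
        have h2 := (S.diffV (n + n₀ + 1)).continuous
        simp only [Sterm]
        exact continuous_const.mul ((continuous_const.mul h1).add (continuous_const.mul h2))
      exact (hc.tendsto lam).comp hxlam
    · refine Eventually.of_forall (fun k => fun n => ?_)
      have := S.sterm_abs_le_of_sdiag hM0 hM (hB k) (n + n₀)
      rw [Real.norm_eq_abs]
      refine this.trans (le_of_eq ?_)
      rw [pow_add]; ring
  have hne : ∀ᶠ k in atTop, x k ≠ lam := hx self_mem_nhdsWithin
  have hPhi : Tendsto (fun k => Phi U V n₀ lam (x k) / (lam - x k)) atTop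
      (nhds (Wr U V n₀ lam)) := (S.slope_tendsto lam n₀).comp hx
  have hEq : ∀ᶠ k in atTop, ∑' n, Sterm q C U V lam (x k) (n + n₀)
      = Phi U V n₀ lam (x k) / (lam - x k) := by
    refine hne.mono (fun k hk => ?_)
    have hsub : lam - x k ≠ 0 := sub_ne_zero.mpr (Ne.symm hk)
    rw [eq_div_iff hsub, mul_comm]
    exact S.tsum_tail_eq lam (x k) n₀
  have hDCT' : Tendsto (fun k => ∑' n, Sterm q C U V lam (x k) (n + n₀)) atTop
      (nhds (Wr U V n₀ lam)) := Tendsto.congr' (hEq.mono (fun k hk => hk.symm)) hPhi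
  exact tendsto_nhds_unique hDCT hDCT'

lemma not_good_blowup {lam : ℝ} (h : ¬ Good q C U V lam) :
    ∀ B : ℝ, ∃ δ : ℝ, 0 < δ ∧ ∀ mu : ℝ, mu ≠ lam → |mu - lam| < δ → B < Sdiag q C U V mu := by
  intro B
  by_contra hcon
  push_neg at hcon
  have hch : ∀ k : ℕ, ∃ mu : ℝ, mu ≠ lam ∧ |mu - lam| < 1/(k+1) ∧ Sdiag q C U V mu ≤ B := by
    intro k
    obtain ⟨mu, h1, h2, h3⟩ := hcon (1/(k+1)) (by positivity)
    exact ⟨mu, h1, h2, h3⟩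
  choose x hx1 hx2 hx3 using hch
  apply h
  refine ⟨x, ?_, B, hx3⟩
  rw [tendsto_nhdsWithin_iff]
  constructor
  · rw [Metric.tendsto_atTop]
    intro ε hε
    obtain ⟨N, hN⟩ := exists_nat_one_div_lt hε
    refine ⟨N, fun k hk => ?_⟩
    have : (1:ℝ)/(k+1) ≤ 1/(N+1) := by
      apply one_div_le_one_div_of_le (by positivity)
      exact_mod_cast Nat.add_le_add_right hk 1
    calc dist (x k) lam = |x k - lam| := rfl
      _ < 1/(k+1) := hx2 k
      _ ≤ 1/(N+1) := this
      _ < ε := hN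
  · exact Eventually.of_forall hx1

lemma Setup.bad_countable (S : Setup q C U V α β P R) :
    Set.Countable {lam : ℝ | ¬ Good q C U V lam} := by
  -- decompose according to (m, k) data
  have hsub : {lam : ℝ | ¬ Good q C U V lam} ⊆
      ⋃ (m : ℕ) (k : ℕ), {lam : ℝ | Sdiag q C U V lam ≤ m ∧
        ∀ mu : ℝ, mu ≠ lam → |mu - lam| < 1/(k+1) → (m:ℝ) < Sdiag q C U V mu} := by
    intro lam hlam
    simp only [Set.mem_iUnion, Set.mem_setOf_eq]
    obtain ⟨m, hm⟩ := exists_nat_ge (Sdiag q C U V lam)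
    obtain ⟨δ, hδ0, hδ⟩ := not_good_blowup (q := q) (C := C) (U := U) (V := V) hlam (m:ℝ)
    obtain ⟨k, hk⟩ := exists_nat_one_div_lt hδ0
    exact ⟨m, k, hm, fun mu h1 h2 => hδ mu h1 (h2.trans hk)⟩
  refine Set.Countable.mono hsub ?_
  refine Set.countable_iUnion (fun m => Set.countable_iUnion (fun k => ?_))
  -- each piece is 1/(k+1)-separated, hence countable
  have : {lam : ℝ | Sdiag q C U V lam ≤ m ∧
      ∀ mu : ℝ, mu ≠ lam → |mu - lam| < 1/(k+1) → (m:ℝ) < Sdiag q C U V mu} ⊆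
      ⋃ (j : ℤ), {lam : ℝ | (Sdiag q C U V lam ≤ m ∧
        ∀ mu : ℝ, mu ≠ lam → |mu - lam| < 1/(k+1) → (m:ℝ) < Sdiag q C U V mu) ∧
        ⌊lam * (k+1)⌋ = j} := by
    intro lam hlam
    simp only [Set.mem_iUnion, Set.mem_setOf_eq]
    exact ⟨⌊lam * (k+1)⌋, hlam, rfl⟩
  refine Set.Countable.mono this (Set.countable_iUnion (fun j => ?_))
  apply Set.Subsingleton.countable
  intro lam1 h1 lam2 h2
  by_contra hne
  -- the two points are within 1/(k+1) of each other
  have hfl : ⌊lam1 * (k+1)⌋ = ⌊lam2 * (k+1)⌋ := h1.2.trans h2.2.symm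
  have hk1 : (0:ℝ) < (k:ℝ)+1 := by positivity
  have hdist : |lam1 - lam2| < 1/(k+1) := by
    have e1 : lam1 * (k+1) - lam2 * (k+1) < 1 := by
      have a1 : lam1 * (k+1) < ⌊lam1 * (k+1)⌋ + 1 := Int.lt_floor_add_one _
      have a2 : (⌊lam2 * (k+1)⌋ : ℝ) ≤ lam2 * (k+1) := Int.floor_le _
      rw [hfl] at a1
      linarith
    have e2 : lam2 * (k+1) - lam1 * (k+1) < 1 := by
      have a1 : lam2 * (k+1) < ⌊lam2 * (k+1)⌋ + 1 := Int.lt_floor_add_one _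
      have a2 : (⌊lam1 * (k+1)⌋ : ℝ) ≤ lam1 * (k+1) := Int.floor_le _
      rw [hfl] at a2
      linarith
    rw [abs_sub_lt_iff]
    constructor <;> rw [lt_div_iff₀ hk1] <;> nlinarith
  have := h1.1.2 lam2 (fun hc => hne (hc.symm ▸ rfl)) (by rwa [abs_sub_comm] at hdist)
  exact absurd h2.1.1 (not_le.mpr this)

lemma uncountable_Ioo {a b : ℝ} (h : a < b) : ¬ (Set.Ioo a b).Countable := by
  intro hc
  have h1 : Cardinal.mk ↑(Set.Ioo a b) ≤ Cardinal.aleph0 :=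
    Cardinal.mk_le_aleph0_iff.mpr (Set.countable_coe_iff.mpr hc)
  rw [Cardinal.mk_Ioo_real h] at h1
  exact absurd h1 (not_le.mpr Cardinal.aleph0_lt_continuum)

theorem Setup.core (S : Setup q C U V α β P R) (lam : ℝ) :
    Wr U V 0 lam = ∑' n, Sterm q C U V lam lam n := by
  by_cases hgood : Good q C U V lam
  · have h := S.good_eq hgood 0
    simpa using h.symm
  by_cases hz : ∀ n, U n lam = 0 ∧ V n lam = 0
  · have h0 : Wr U V 0 lam = 0 := by rw [Wr, (hz 0).1, (hz 0).2]; ring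
    have h1 : ∀ n, Sterm q C U V lam lam n = 0 := fun n => by
      rw [Sterm, (hz n).1, (hz (n+1)).2]; ring
    rw [h0]
    exact (by simp [h1] : ∑' n, Sterm q C U V lam lam n = 0).symm
  · exfalso
    push_neg at hz
    obtain ⟨n₀, hn₀⟩ := hz
    set f₀ : ℝ := U n₀ lam with hf₀
    set g₀ : ℝ := V n₀ lam with hg₀
    have hR2 : 0 < f₀^2 + g₀^2 := by
      by_cases hf : f₀ = 0
      · have hg : g₀ ≠ 0 := hn₀ hf
        nlinarith [pow_two_pos_of_ne_zero hg, sq_nonneg f₀]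
      · nlinarith [pow_two_pos_of_ne_zero hf, sq_nonneg g₀]
    set R2 : ℝ := f₀^2 + g₀^2 with hR2def
    -- auxiliary functions
    set ft : ℝ → ℝ := fun mu => U n₀ mu * f₀ + V n₀ mu * g₀ with hft_def
    set gt : ℝ → ℝ := fun mu => V n₀ mu * f₀ - U n₀ mu * g₀ with hgt_def
    set rho2 : ℝ → ℝ := fun mu => (U n₀ mu)^2 + (V n₀ mu)^2 with hrho_def
    set hd : ℝ → ℝ := fun mu => ∑ n ∈ Finset.range n₀, Sterm q C U V mu mu n with hhd_def
    have hft_cont : Continuous ft :=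
      ((S.diffU n₀).continuous.mul continuous_const).add
        ((S.diffV n₀).continuous.mul continuous_const)
    have hrho_cont : Continuous rho2 :=
      ((S.diffU n₀).continuous.pow 2).add ((S.diffV n₀).continuous.pow 2)
    have hhd_cont : Continuous hd := by
      refine continuous_finset_sum _ (fun n _ => ?_)
      have h1 := (S.diffU n).continuous
      have h2 := (S.diffV (n+1)).continuous
      simp only [Sterm]
      exact continuous_const.mul ((h1.mul h1).add (h2.mul h2))
    -- an open neighbourhood with good bounds
    set Wset : Set ℝ := {mu | R2/2 < ft mu ∧ rho2 mu < R2 + 1 ∧ |hd mu| < |hd lam| + 1}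
      with hWset_def
    have hWopen : IsOpen Wset := by
      refine IsOpen.inter (isOpen_lt continuous_const hft_cont) (IsOpen.inter ?_ ?_)
      · exact isOpen_lt hrho_cont continuous_const
      · exact isOpen_lt hhd_cont.abs continuous_const
    have hWlam : lam ∈ Wset := by
      refine ⟨?_, ?_, ?_⟩
      · show R2/2 < U n₀ lam * f₀ + V n₀ lam * g₀
        rw [← hf₀, ← hg₀]
        nlinarith
      · show (U n₀ lam)^2 + (V n₀ lam)^2 < R2 + 1
        rw [← hf₀, ← hg₀]
        nlinarith
      · linarith [abs_nonneg (hd lam)]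
    obtain ⟨δ₀, hδ₀pos, hδ₀⟩ := Metric.isOpen_iff.mp hWopen lam hWlam
    -- positivity of rho2 on the neighbourhood
    have hρpos : ∀ mu ∈ Metric.ball lam δ₀, 0 < rho2 mu := by
      intro mu hmu
      rcases (hδ₀ hmu) with ⟨h1, -, -⟩
      by_contra hcon
      push_neg at hcon
      have hrr : rho2 mu = (U n₀ mu)^2 + (V n₀ mu)^2 := rfl
      have hU2 : (U n₀ mu)^2 = 0 := by
        have := sq_nonneg (U n₀ mu); have := sq_nonneg (V n₀ mu); linarith [hcon, hrr ▸ hcon]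
      have hV2 : (V n₀ mu)^2 = 0 := by
        have := sq_nonneg (U n₀ mu); have := sq_nonneg (V n₀ mu); linarith [hrr ▸ hcon]
      have hU0 : U n₀ mu = 0 ∧ V n₀ mu = 0 := ⟨sq_eq_zero_iff.mp hU2, sq_eq_zero_iff.mp hV2⟩
      rw [hft_def] at h1
      simp only [hU0.1, hU0.2, zero_mul, add_zero] at h1
      nlinarith
    -- the derivative formula for the angle function
    set theta : ℝ → ℝ := fun mu => Real.arctan (gt mu / ft mu) with htheta_def
    set theta' : ℝ → ℝ := fun mu => -(Wr U V n₀ mu) / rho2 mu with htheta'_def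
    have htheta : ∀ mu ∈ Metric.ball lam δ₀, HasDerivAt theta (theta' mu) mu := by
      intro mu hmu
      rcases (hδ₀ hmu) with ⟨h1, -, -⟩
      have hftpos : 0 < ft mu := lt_trans (by positivity) h1
      have hftne : ft mu ≠ 0 := ne_of_gt hftpos
      have hρ : 0 < rho2 mu := hρpos mu hmu
      have hu : HasDerivAt (U n₀) (deriv (U n₀) mu) mu := ((S.diffU n₀) mu).hasDerivAt
      have hv : HasDerivAt (V n₀) (deriv (V n₀) mu) mu := ((S.diffV n₀) mu).hasDerivAt
      have hftd : HasDerivAt ft (deriv (U n₀) mu * f₀ + deriv (V n₀) mu * g₀) mu :=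
        (hu.mul_const f₀).add (hv.mul_const g₀)
      have hgtd : HasDerivAt gt (deriv (V n₀) mu * f₀ - deriv (U n₀) mu * g₀) mu :=
        (hv.mul_const f₀).sub (hu.mul_const g₀)
      have hdiv : HasDerivAt (fun mu => gt mu / ft mu)
          (((deriv (V n₀) mu * f₀ - deriv (U n₀) mu * g₀) * ft mu
            - gt mu * (deriv (U n₀) mu * f₀ + deriv (V n₀) mu * g₀)) / (ft mu)^2) mu :=
        hgtd.div hftd hftne
      have harc := hdiv.arctan
      have hnum : (deriv (V n₀) mu * f₀ - deriv (U n₀) mu * g₀) * ft mu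
          - gt mu * (deriv (U n₀) mu * f₀ + deriv (V n₀) mu * g₀)
          = -(R2 * Wr U V n₀ mu) := by
        simp only [hft_def, hgt_def, hR2def, Wr]
        ring
      have hden : (ft mu)^2 + (gt mu)^2 = R2 * rho2 mu := by
        simp only [hft_def, hgt_def, hR2def, hrho_def]
        ring
      have key : 1 / (1 + (gt mu / ft mu) ^ 2) *
          (((deriv (V n₀) mu * f₀ - deriv (U n₀) mu * g₀) * ft mu
            - gt mu * (deriv (U n₀) mu * f₀ + deriv (V n₀) mu * g₀)) / ft mu ^ 2)
          = theta' mu := by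
        have e1 : (1 + (gt mu / ft mu) ^ 2) = (ft mu^2 + gt mu^2) / ft mu^2 := by
          field_simp
        rw [hnum, e1, hden]
        have hR2ne : f₀^2 + g₀^2 ≠ 0 := ne_of_gt hR2
        have hρne : (U n₀ mu)^2 + (V n₀ mu)^2 ≠ 0 := ne_of_gt (hρpos mu hmu)
        simp only [htheta'_def, hrho_def, hR2def]
        field_simp
      exact key ▸ harc
    -- quantities for the contradiction
    set T₀ : ℝ := theta' lam with hT₀def
    set K : ℝ := |T₀| + 1 with hKdef
    have hKpos : 0 < K := by positivity
    have hT₀K : -K < T₀ := by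
      have := neg_abs_le T₀
      rw [hKdef]; linarith
    set H : ℝ := |hd lam| + 1 with hHdef
    set Bbig : ℝ := K * (R2 + 1) + H with hBbigdef
    obtain ⟨δ₁, hδ₁pos, hδ₁⟩ := not_good_blowup (q := q) (C := C) (U := U) (V := V) hgood Bbig
    set δ : ℝ := min δ₀ δ₁ with hδdef
    have hδpos : 0 < δ := lt_min hδ₀pos hδ₁pos
    -- at good points near lam the derivative is very negative
    have hslope : ∀ mu : ℝ, mu ≠ lam → |mu - lam| < δ → Good q C U V mu → theta' mu ≤ -K := by
      intro mu hne hlt hgoodmu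
      have hball : mu ∈ Metric.ball lam δ₀ := by
        rw [Metric.mem_ball]
        exact lt_of_lt_of_le hlt (min_le_left _ _)
      rcases (hδ₀ hball) with ⟨-, h2, h3⟩
      have hρ : 0 < rho2 mu := hρpos mu hball
      have hWr : Wr U V n₀ mu = Sdiag q C U V mu - hd mu := by
        have hshift := Summable.sum_add_tsum_nat_add n₀ (S.summable_sterm mu mu)
        have hgeq := S.good_eq hgoodmu n₀
        have hSd : Sdiag q C U V mu = ∑' n, Sterm q C U V mu mu n := rfl
        rw [hSd, ← hshift, ← hgeq]
        simp only [hhd_def]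
        ring
      have hSd : Bbig < Sdiag q C U V mu := hδ₁ mu hne (lt_of_lt_of_le hlt (min_le_right _ _))
      have hWrbig : K * (R2 + 1) < Wr U V n₀ mu := by
        have : -H ≤ -(hd mu) := by
          have := le_abs_self (hd mu)
          rw [hHdef]; linarith
        rw [hWr]
        rw [hBbigdef] at hSd
        linarith
      have hKrho : K * rho2 mu ≤ K * (R2 + 1) :=
        mul_le_mul_of_nonneg_left (le_of_lt h2) hKpos.le
      rw [htheta'_def]
      simp only []
      rw [div_le_iff₀ hρ]
      nlinarith
    -- pick a good point to the right of lam
    have hbadc := S.bad_countable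
    have hpick : ∃ mu : ℝ, mu ∈ Set.Ioo lam (lam + δ) ∧ Good q C U V mu := by
      by_contra hcon
      push_neg at hcon
      have hsub : Set.Ioo lam (lam + δ) ⊆ {x : ℝ | ¬ Good q C U V x} := fun x hx => hcon x hx
      exact uncountable_Ioo (by linarith) (Set.Countable.mono hsub hbadc)
    obtain ⟨mu₁, hmu₁, hgoodmu₁⟩ := hpick
    have hmu₁ne : mu₁ ≠ lam := ne_of_gt hmu₁.1
    have hmu₁lt : |mu₁ - lam| < δ := by
      rw [abs_of_pos (by linarith [hmu₁.1] : (0:ℝ) < mu₁ - lam)]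
      linarith [hmu₁.2]
    have hmu₁slope : theta' mu₁ ≤ -K := hslope mu₁ hmu₁ne hmu₁lt hgoodmu₁
    -- Darboux on [lam, mu₁]
    have hIccball : Set.Icc lam mu₁ ⊆ Metric.ball lam δ₀ := by
      intro x hx
      rw [Metric.mem_ball]
      have : |x - lam| < δ := by
        rw [abs_of_nonneg (by linarith [hx.1] : (0:ℝ) ≤ x - lam)]
        have := hx.2
        have := hmu₁.2
        linarith
      exact lt_of_lt_of_le this (min_le_left _ _)
    have hderivIcc : ∀ x ∈ Set.Icc lam mu₁, HasDerivWithinAt theta (theta' x) (Set.Icc lam mu₁) x :=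
      fun x hx => (htheta x (hIccball hx)).hasDerivWithinAt
    have hdarboux : Set.Ioo (-K) T₀ ⊆ theta' '' (Set.Ioo lam mu₁) := by
      intro m hm
      exact exists_hasDerivWithinAt_eq_of_lt_of_gt hmu₁.1.le hderivIcc
        (by rw [hT₀def] at hm; exact hm.2) (lt_of_le_of_lt hmu₁slope hm.1)
    -- every preimage point must be bad
    have hioo : Set.Ioo (-K) T₀ ⊆ theta' '' {x : ℝ | ¬ Good q C U V x} := by
      intro m hm
      obtain ⟨c, hc, hcm⟩ := hdarboux hm
      refine ⟨c, ?_, hcm⟩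
      intro hgoodc
      have hcne : c ≠ lam := ne_of_gt hc.1
      have hclt : |c - lam| < δ := by
        rw [abs_of_pos (by linarith [hc.1] : (0:ℝ) < c - lam)]
        linarith [hc.2, hmu₁.2]
      have := hslope c hcne hclt hgoodc
      rw [hcm] at this
      linarith [hm.1]
    exact uncountable_Ioo hT₀K (Set.Countable.mono hioo (hbadc.image theta'))
end QDiracProof

/-- eq. (41): if `y(x,λ) = (y₁(x,λ), y₂(x,λ))` solves the `q`-Dirac
system for every `λ`, depends differentiably on `λ`, and its values and `λ`-derivatives
at `x = 0` are independent of `λ` with `∂y₁/∂λ(0,λ) = ∂y₂/∂λ(0,λ) = 0`, then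
`y₂(aq⁻¹,λ) ∂y₁(a,λ)/∂λ − y₁(a,λ) ∂y₂(aq⁻¹,λ)/∂λ = ∫₀ᵃ (y₁² + y₂²) d_q x`. -/
theorem qDirac_norming_identity (q a : ℝ) (hq0 : 0 < q) (hq1 : q < 1) (ha : 0 < a)
    (p r : ℝ → ℝ) (y₁ y₂ : ℝ → ℝ → ℝ)
    (hsol : ∀ lam : ℝ, SolvesQDiracR q p r lam (y₁ lam) (y₂ lam) (qGeomSet q a))
    (hreg : ∀ lam : ℝ, QRegularAtZeroR q (y₁ lam) ∧ QRegularAtZeroR q (y₂ lam))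
    (hdiff : ∀ x : ℝ, Differentiable ℝ (fun lam => y₁ lam x) ∧
      Differentiable ℝ (fun lam => y₂ lam x))
    (hval0 : ∀ lam lam' : ℝ, y₁ lam 0 = y₁ lam' 0 ∧ y₂ lam 0 = y₂ lam' 0)
    (hderiv0 : ∀ lam : ℝ, deriv (fun l => y₁ l 0) lam = 0 ∧ deriv (fun l => y₂ l 0) lam = 0) :
    ∀ lam : ℝ,
      y₂ lam (a / q) * deriv (fun l => y₁ l a) lam
          - y₁ lam a * deriv (fun l => y₂ l (a / q)) lam
        = qIntegralR q (fun x => (y₁ lam x) ^ 2 + (y₂ lam x) ^ 2) a := by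
  intro lam
  set Uf : ℕ → ℝ → ℝ := fun n l => y₁ l (a * q ^ n) with hUf
  set Vf : ℕ → ℝ → ℝ := fun n l => y₂ l (a * q ^ n / q) with hVf
  have hqne : q ≠ 0 := ne_of_gt hq0
  have hxpos : ∀ n : ℕ, (0:ℝ) < a * q ^ n := fun n => mul_pos ha (pow_pos hq0 n)
  have hxne : ∀ n : ℕ, a * q ^ n ≠ 0 := fun n => ne_of_gt (hxpos n)
  have hargeq : ∀ n : ℕ, a * q ^ (n+1) / q = a * q ^ n := by
    intro n
    rw [div_eq_iff hqne, pow_succ]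
    ring
  have S : QDiracProof.Setup q (a * (1-q)) Uf Vf (y₁ 0 0) (y₂ 0 0)
      (fun n => p (a * q ^ n)) (fun n => r (a * q ^ n)) := by
    refine ⟨hq0, hq1, by nlinarith, ?_, ?_, ?_, ?_, ?_, ?_⟩
    · -- rec1
      intro l n
      have hmem : a * q ^ n ∈ qGeomSet q a := Or.inl ⟨n, rfl⟩
      have h := (hsol l (a * q ^ n) hmem).1
      rw [qDqInvR, if_neg (hxne n)] at h
      show y₂ l (a * q ^ (n+1) / q)
        = y₂ l (a * q ^ n / q) + a * (1-q) * q ^ n * (l - p (a * q ^ n)) * y₁ l (a * q ^ n)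
      rw [hargeq n]
      have hq1' : q - 1 ≠ 0 := by intro hc; linarith
      have hxn : a * q ^ n ≠ 0 := hxne n
      field_simp at h
      apply mul_left_cancel₀ hqne
      linear_combination (-q) * h
    · -- rec2
      intro l n
      have hmem : a * q ^ n ∈ qGeomSet q a := Or.inl ⟨n, rfl⟩
      have h := (hsol l (a * q ^ n) hmem).2
      rw [qDqR, if_neg (hxne n)] at h
      have e2 : q * (a * q ^ n) = a * q ^ (n+1) := by rw [pow_succ]; ring
      rw [e2] at h
      show y₁ l (a * q ^ (n+1))
        = y₁ l (a * q ^ n) - a * (1-q) * q ^ n * (l - r (a * q ^ n)) * y₂ l (a * q ^ (n+1) / q)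
      rw [hargeq n]
      have hq1' : (1:ℝ) - q ≠ 0 := by intro hc; linarith
      have hxn : a * q ^ n ≠ 0 := hxne n
      field_simp at h
      linear_combination -h
    · -- limU
      intro l
      have h := (hreg l).1 a
      rwa [(hval0 l 0).1] at h
    · -- limV
      intro l
      have h := (hreg l).2 (a/q)
      rw [(hval0 l 0).2] at h
      refine h.congr (fun n => ?_)
      simp only [hVf]
      rw [div_mul_eq_mul_div]
    · exact fun n => (hdiff (a * q ^ n)).1
    · exact fun n => (hdiff (a * q ^ n / q)).2
  have hcore := S.core lam
  have hU0 : Uf 0 = fun l => y₁ l a := by funext l; simp [hUf]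
  have hV0 : Vf 0 = fun l => y₂ l (a/q) := by funext l; simp [hVf]
  have hLHS : y₂ lam (a / q) * deriv (fun l => y₁ l a) lam
      - y₁ lam a * deriv (fun l => y₂ l (a / q)) lam = QDiracProof.Wr Uf Vf 0 lam := by
    rw [QDiracProof.Wr, hU0, hV0]
  have hRHS : qIntegralR q (fun x => (y₁ lam x) ^ 2 + (y₂ lam x) ^ 2) a
      = ∑' n, QDiracProof.Sterm q (a * (1-q)) Uf Vf lam lam n := by
    rw [qIntegralR, ← tsum_mul_left]
    refine tsum_congr (fun n => ?_)
    rw [QDiracProof.Sterm]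
    show a * (1-q) * (q ^ n * ((y₁ lam (a * q ^ n))^2 + (y₂ lam (a * q ^ n))^2))
      = a * (1-q) * q ^ n * (y₁ lam (a * q ^ n) * y₁ lam (a * q ^ n)
        + y₂ lam (a * q ^ (n+1) / q) * y₂ lam (a * q ^ (n+1) / q))
    rw [hargeq n]
    ring
  rw [hLHS, hRHS, hcore]
end

section
/- Let q ∈ (0,1), a > 0, let p, r be real-valued functions on [0,a], and let k_{ij} be real numbers with (k₁₁,k₁₂) ≠ (0,0) and (k₂₁,k₂₂) ≠ (0,0). Every eigenvalue of the q-Dirac boundary value problem is simple; that is, if λ₀ is a zero of the characteristic function Δ(λ) := k₂₁ φ₁(a,λ) + k₂₂ φ₂(aq⁻¹,λ), then dΔ/dλ (λ₀) ≠ 0. -/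
open Filter

private lemma qds_step_alg (c pp rr : ℝ) (lam z₁ z₂ : ℂ) :
    (z₁ * (starRingEnd ℂ) (z₂ - (c:ℂ) * (lam - (pp:ℂ)) * z₁)).im
      - ((z₁ - (c:ℂ) * (lam - (rr:ℂ)) * z₂) * (starRingEnd ℂ) z₂).im
    = c * lam.im * (Complex.normSq z₁ + Complex.normSq z₂) := by
  simp [Complex.normSq_apply, Complex.mul_im, Complex.mul_re, Complex.sub_re,
    Complex.sub_im, Complex.conj_re, Complex.conj_im, Complex.ofReal_re, Complex.ofReal_im]
  ring

private lemma qds_bz (k₂₁ k₂₂ : ℝ) (hk2 : (k₂₁, k₂₂) ≠ (0,0)) (z₁ z₂ : ℂ)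
    (h : (k₂₁:ℂ)*z₁ + (k₂₂:ℂ)*z₂ = 0) : (z₁ * (starRingEnd ℂ) z₂).im = 0 := by
  have key : (k₂₂:ℝ) * (z₁ * (starRingEnd ℂ) z₂).im = (z₁ * (starRingEnd ℂ) ((k₂₁:ℂ)*z₁ + (k₂₂:ℂ)*z₂)).im := by
    simp [Complex.mul_im, Complex.mul_re, Complex.add_re, Complex.add_im,
      Complex.conj_re, Complex.conj_im, Complex.ofReal_re, Complex.ofReal_im]
    ring
  by_cases hk : k₂₂ = 0
  · have hk21 : k₂₁ ≠ 0 := by intro h21; exact hk2 (by simp [hk, h21])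
    have hz₁ : z₁ = 0 := by
      have : (k₂₁:ℂ) * z₁ = 0 := by simpa [hk] using h
      rcases mul_eq_zero.mp this with h' | h'
      · exact absurd (by exact_mod_cast h') hk21
      · exact h'
    simp [hz₁]
  · have h0 : (k₂₂:ℝ) * (z₁ * (starRingEnd ℂ) z₂).im = 0 := by rw [key, h]; simp
    rcases mul_eq_zero.mp h0 with h'|h'
    · exact absurd h' hk
    · exact h'

private lemma qds_ub (k₂₁ k₂₂ : ℝ) (hk2 : (k₂₁, k₂₂) ≠ (0,0)) :
    ∃ κ : ℝ, 0 < κ ∧ ∀ z₁ z₂ D : ℂ, (k₂₁:ℂ)*z₁ + (k₂₂:ℂ)*z₂ = D →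
      (z₁ * (starRingEnd ℂ) z₂).im ≤ κ * (‖D‖ * (‖z₁‖ + ‖z₂‖)) := by
  by_cases hk : k₂₂ = 0
  · have hk21 : k₂₁ ≠ 0 := by intro h21; exact hk2 (by simp [hk, h21])
    have hc : (k₂₁:ℂ) ≠ 0 := by exact_mod_cast hk21
    refine ⟨|k₂₁|⁻¹, by positivity, fun z₁ z₂ D h => ?_⟩
    have hz₁ : z₁ = (k₂₁:ℂ)⁻¹ * D := by rw [← h]; field_simp [hk]; simp [hk]
    have h1 : ‖z₁‖ = |k₂₁|⁻¹ * ‖D‖ := by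
      rw [hz₁]; simp [norm_mul, map_inv₀]
    have h4 : ‖D‖ * ‖z₂‖ ≤ ‖D‖ * (‖z₁‖ + ‖z₂‖) := by
      nlinarith [norm_nonneg D, norm_nonneg z₁]
    calc (z₁ * (starRingEnd ℂ) z₂).im ≤ |(z₁ * (starRingEnd ℂ) z₂).im| := le_abs_self _
      _ ≤ ‖z₁ * (starRingEnd ℂ) z₂‖ := by
          exact Complex.abs_im_le_norm _
      _ = ‖z₁‖ * ‖z₂‖ := by simp [norm_mul]
      _ = |k₂₁|⁻¹ * (‖D‖ * ‖z₂‖) := by rw [h1]; ring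
      _ ≤ |k₂₁|⁻¹ * (‖D‖ * (‖z₁‖ + ‖z₂‖)) :=
          mul_le_mul_of_nonneg_left h4 (by positivity)
  · refine ⟨|k₂₂|⁻¹, by positivity, fun z₁ z₂ D h => ?_⟩
    have key : (k₂₂:ℝ) * (z₁ * (starRingEnd ℂ) z₂).im = (z₁ * (starRingEnd ℂ) D).im := by
      rw [← h]
      simp [Complex.mul_im, Complex.mul_re, Complex.add_re, Complex.add_im,
        Complex.conj_re, Complex.conj_im, Complex.ofReal_re, Complex.ofReal_im]
      ring
    have h2 : (z₁ * (starRingEnd ℂ) z₂).im = k₂₂⁻¹ * (z₁ * (starRingEnd ℂ) D).im := by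
      rw [← key, inv_mul_cancel_left₀ hk]
    have h3 : k₂₂⁻¹ * (z₁ * (starRingEnd ℂ) D).im ≤ |k₂₂|⁻¹ * (‖z₁‖ * ‖D‖) := by
      calc k₂₂⁻¹ * (z₁ * (starRingEnd ℂ) D).im ≤ |k₂₂⁻¹ * (z₁ * (starRingEnd ℂ) D).im| := le_abs_self _
        _ = |k₂₂|⁻¹ * |(z₁ * (starRingEnd ℂ) D).im| := by rw [abs_mul, abs_inv]
        _ ≤ |k₂₂|⁻¹ * ‖z₁ * (starRingEnd ℂ) D‖ := by
            gcongr
            exact Complex.abs_im_le_norm _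
        _ = |k₂₂|⁻¹ * (‖z₁‖ * ‖D‖) := by simp [norm_mul]
    rw [h2]
    refine h3.trans ?_
    have h4 : ‖z₁‖ * ‖D‖ ≤ ‖D‖ * (‖z₁‖ + ‖z₂‖) := by
      nlinarith [norm_nonneg D, norm_nonneg z₂]
    exact mul_le_mul_of_nonneg_left h4 (by positivity)

private lemma qds_core (k₁₁ k₁₂ k₂₁ k₂₂ : ℝ)
    (hk1 : (k₁₁, k₁₂) ≠ (0,0)) (hk2 : (k₂₁, k₂₂) ≠ (0,0))
    (U V W : ℂ → ℕ → ℂ) (cc pp rr : ℕ → ℝ) (hccpos : ∀ n, 0 < cc n)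
    (hrecW : ∀ lam n, W lam n = V lam n - ((cc n : ℝ) : ℂ) * (lam - ((pp n : ℝ):ℂ)) * U lam n)
    (hrecU : ∀ lam n, U lam (n+1) = U lam n - ((cc n : ℝ):ℂ) * (lam - ((rr n : ℝ):ℂ)) * V lam n)
    (hWV : ∀ lam n, W lam (n+1) = V lam n)
    (hUlim : ∀ lam, Tendsto (U lam) atTop (nhds ((k₁₂:ℂ))))
    (hVlim : ∀ lam, Tendsto (V lam) atTop (nhds (-(k₁₁:ℂ))))
    (hUcont : ∀ n, Continuous fun lam => U lam n)
    (hVcont : ∀ n, Continuous fun lam => V lam n)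
    (hWcont : ∀ n, Continuous fun lam => W lam n)
    (Δf : ℂ → ℂ) (hΔf : ∀ lam, Δf lam = (k₂₁:ℂ) * U lam 0 + (k₂₂:ℂ) * W lam 0)
    (lam₀ : ℂ) (hΔdiff : DifferentiableAt ℂ Δf lam₀)
    (hΔ0 : Δf lam₀ = 0) (hd : deriv Δf lam₀ = 0) : False := by
  classical
  set T : ℂ → ℕ → ℝ := fun lam n => (U lam n * (starRingEnd ℂ) (W lam n)).im with hT
  set ns : ℂ → ℕ → ℝ := fun lam n => Complex.normSq (U lam n) + Complex.normSq (V lam n) with hns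
  have hnsnn : ∀ lam n, 0 ≤ ns lam n := fun lam n =>
    add_nonneg (Complex.normSq_nonneg _) (Complex.normSq_nonneg _)
  -- step identity
  have hstep : ∀ (lam : ℂ) (n : ℕ), T lam n - T lam (n+1) = cc n * lam.im * ns lam n := by
    intro lam n
    simp only [hT, hns]
    rw [hWV lam n, hrecU lam n, hrecW lam n]
    exact qds_step_alg (cc n) (pp n) (rr n) lam (U lam n) (V lam n)
  -- telescoping
  have htel : ∀ (lam : ℂ) (N : ℕ),
      lam.im * ∑ n ∈ Finset.range N, cc n * ns lam n = T lam 0 - T lam N := by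
    intro lam N
    rw [Finset.mul_sum, ← Finset.sum_range_sub' (fun n => T lam n) N]
    refine Finset.sum_congr rfl fun n _ => ?_
    rw [hstep]
    ring
  -- T tends to 0
  have hTlim : ∀ lam, Tendsto (fun N => T lam N) atTop (nhds 0) := by
    intro lam
    have hWlim : Tendsto (fun n => W lam n) atTop (nhds (-(k₁₁:ℂ))) := by
      rw [← tendsto_add_atTop_iff_nat 1]
      simpa only [hWV lam] using hVlim lam
    have hconj : Tendsto (fun n => (starRingEnd ℂ) (W lam n)) atTop
        (nhds ((starRingEnd ℂ) (-(k₁₁:ℂ)))) := by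
      exact (Complex.continuous_conj.tendsto _).comp hWlim
    have hmul := (hUlim lam).mul hconj
    have him := (Complex.continuous_im.tendsto _).comp hmul
    have h0 : (((k₁₂:ℂ)) * (starRingEnd ℂ) (-(k₁₁:ℂ))).im = 0 := by simp
    rw [h0] at him
    simp only [hT]
    exact him.congr fun N => rfl
  -- key tendsto
  have hkey : ∀ lam, Tendsto (fun N => lam.im * ∑ n ∈ Finset.range N, cc n * ns lam n)
      atTop (nhds (T lam 0)) := by
    intro lam
    have h1 : Tendsto (fun N => T lam 0 - T lam N) atTop (nhds (T lam 0 - 0)) :=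
      tendsto_const_nhds.sub (hTlim lam)
    rw [sub_zero] at h1
    exact h1.congr fun N => (htel lam N).symm
  -- nonnegativity of summands
  have hterm : ∀ (lam : ℂ) (n : ℕ), 0 ≤ cc n * ns lam n :=
    fun lam n => mul_nonneg (hccpos n).le (hnsnn lam n)
  by_cases him : lam₀.im = 0
  · -- real eigenvalue case: the quantitative simplicity argument
    obtain ⟨κ, hκ, hub⟩ := qds_ub k₂₁ k₂₂ hk2
    -- pick an index where the eigenfunction does not vanish
    have hk1' : k₁₁ ≠ 0 ∨ k₁₂ ≠ 0 := by
      by_contra h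
      push_neg at h
      exact hk1 (by rw [Prod.mk.injEq]; exact ⟨h.1, h.2⟩)
    have hm : ∃ m, 0 < ns lam₀ m := by
      rcases hk1' with h | h
      · have hne : -(k₁₁:ℂ) ≠ 0 := by
          simp only [ne_eq, neg_eq_zero]
          exact_mod_cast h
        obtain ⟨m, hm'⟩ := ((hVlim lam₀).eventually_ne hne).exists
        refine ⟨m, ?_⟩
        have h1 := Complex.normSq_pos.mpr hm'
        have h2 := Complex.normSq_nonneg (U lam₀ m)
        simp only [hns]
        linarith
      · have hne : (k₁₂:ℂ) ≠ 0 := by exact_mod_cast h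
        obtain ⟨m, hm'⟩ := ((hUlim lam₀).eventually_ne hne).exists
        refine ⟨m, ?_⟩
        have h1 := Complex.normSq_pos.mpr hm'
        have h2 := Complex.normSq_nonneg (V lam₀ m)
        simp only [hns]
        linarith
    obtain ⟨m, hmpos⟩ := hm
    set t : ℕ → ℝ := fun j => 1/(j+1 : ℝ) with htdef
    have htpos : ∀ j, 0 < t j := fun j => by positivity
    have ht0 : Tendsto t atTop (nhds 0) := tendsto_one_div_add_atTop_nhds_zero_nat
    set L : ℕ → ℂ := fun j => lam₀ + (t j : ℂ) * Complex.I with hLdef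
    have hLim : ∀ j, (L j).im = t j := by
      intro j
      simp [hLdef, him]
    have hLlam : Tendsto L atTop (nhds lam₀) := by
      have h1 : Tendsto (fun j => ((t j:ℝ):ℂ)) atTop (nhds ((0:ℝ):ℂ)) :=
        (Complex.continuous_ofReal.tendsto _).comp ht0
      have h2 : Tendsto (fun j => ((t j:ℝ):ℂ) * Complex.I) atTop (nhds 0) := by
        simpa using h1.mul_const Complex.I
      simpa using tendsto_const_nhds.add h2
    have hD : ∀ j, (k₂₁:ℂ) * U (L j) 0 + (k₂₂:ℂ) * W (L j) 0 = Δf (L j) :=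
      fun j => (hΔf (L j)).symm
    -- lower bound
    have hlow : ∀ j, t j * (cc m * ns (L j) m) ≤ T (L j) 0 := by
      intro j
      refine ge_of_tendsto (hkey (L j)) ?_
      filter_upwards [eventually_ge_atTop (m+1)] with N hN
      rw [hLim j]
      refine mul_le_mul_of_nonneg_left ?_ (htpos j).le
      exact Finset.single_le_sum (fun i _ => hterm (L j) i)
        (Finset.mem_range.mpr (lt_of_lt_of_le (Nat.lt_succ_self m) hN))
    have hcomb : ∀ j, cc m * ns (L j) m ≤
        κ * (‖Δf (L j)‖ / t j * (‖U (L j) 0‖ + ‖W (L j) 0‖)) := by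
      intro j
      have h1 := hlow j
      have h2 := hub (U (L j) 0) (W (L j) 0) (Δf (L j)) (hD j)
      have h3 : t j * (cc m * ns (L j) m) ≤
          t j * (κ * (‖Δf (L j)‖ / t j * (‖U (L j) 0‖ + ‖W (L j) 0‖))) := by
        have he : t j * (κ * (‖Δf (L j)‖ / t j * (‖U (L j) 0‖ + ‖W (L j) 0‖)))
            = κ * (‖Δf (L j)‖ * (‖U (L j) 0‖ + ‖W (L j) 0‖)) := by
          field_simp [(htpos j).ne']
        rw [he]
        exact h1.trans h2
      exact le_of_mul_le_mul_left h3 (htpos j)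
    -- the slope tends to 0
    have hΔlam0 : Δf lam₀ = 0 := hΔ0
    have hslope : Tendsto (fun j => ‖Δf (L j)‖ / t j) atTop (nhds 0) := by
      have hder : HasDerivAt Δf 0 lam₀ := by
        have h1 := hΔdiff.hasDerivAt
        rwa [hd] at h1
      have hs := hasDerivAt_iff_tendsto_slope.mp hder
      have hLne : ∀ j, L j ≠ lam₀ := by
        intro j h
        have : ((t j : ℝ):ℂ) * Complex.I = 0 := by
          have := congrArg (fun z => z - lam₀) h
          simpa [hLdef] using this
        rcases mul_eq_zero.mp this with h' | h'
        · exact absurd (by exact_mod_cast h') (htpos j).ne'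
        · exact Complex.I_ne_zero h'
      have hLin : Tendsto L atTop (nhdsWithin lam₀ {lam₀}ᶜ) := by
        rw [tendsto_nhdsWithin_iff]
        exact ⟨hLlam, Eventually.of_forall fun j => hLne j⟩
      have hcomp := hs.comp hLin
      have hnorm := hcomp.norm
      rw [norm_zero] at hnorm
      refine hnorm.congr fun j => ?_
      show ‖slope Δf lam₀ (L j)‖ = ‖Δf (L j)‖ / t j
      rw [slope_def_field, hΔlam0, sub_zero]
      rw [norm_div]
      congr 1
      have : L j - lam₀ = ((t j:ℝ):ℂ) * Complex.I := by simp [hLdef]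
      rw [this]
      simp [abs_of_pos (htpos j)]
    -- RHS tends to 0
    have hRlim : Tendsto (fun j => κ * (‖Δf (L j)‖ / t j * (‖U (L j) 0‖ + ‖W (L j) 0‖)))
        atTop (nhds 0) := by
      have hcont1 : Tendsto (fun j => ‖U (L j) 0‖) atTop (nhds ‖U lam₀ 0‖) :=
        (((hUcont 0).tendsto _).comp hLlam).norm
      have hcont2 : Tendsto (fun j => ‖W (L j) 0‖) atTop (nhds ‖W lam₀ 0‖) :=
        (((hWcont 0).tendsto _).comp hLlam).norm
      have h1 := hslope.mul (hcont1.add hcont2)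
      rw [zero_mul] at h1
      simpa using h1.const_mul κ
    -- LHS tends to a positive number
    have hLHS : Tendsto (fun j => cc m * ns (L j) m) atTop (nhds (cc m * ns lam₀ m)) := by
      have h1 : Tendsto (fun j => Complex.normSq (U (L j) m)) atTop
          (nhds (Complex.normSq (U lam₀ m))) :=
        ((Complex.continuous_normSq.tendsto _).comp (((hUcont m).tendsto _).comp hLlam))
      have h2 : Tendsto (fun j => Complex.normSq (V (L j) m)) atTop
          (nhds (Complex.normSq (V lam₀ m))) :=
        ((Complex.continuous_normSq.tendsto _).comp (((hVcont m).tendsto _).comp hLlam))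
      simp only [hns]
      exact (h1.add h2).const_mul (cc m)
    have hfinal : cc m * ns lam₀ m ≤ 0 := le_of_tendsto_of_tendsto' hLHS hRlim hcomb
    have : 0 < cc m * ns lam₀ m := mul_pos (hccpos m) hmpos
    linarith
  · -- non-real: contradiction already from the boundary condition
    have hT0 : T lam₀ 0 = 0 := by
      simp only [hT]
      exact qds_bz k₂₁ k₂₂ hk2 _ _ (by rw [← hΔf lam₀]; exact hΔ0)
    have hS : Tendsto (fun N => ∑ n ∈ Finset.range N, cc n * ns lam₀ n) atTop (nhds 0) := by
      have h2 := (hkey lam₀).const_mul (lam₀.im)⁻¹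
      rw [hT0, mul_zero] at h2
      refine h2.congr fun N => ?_
      rw [inv_mul_cancel_left₀ him]
    have hmono : Monotone fun N => ∑ n ∈ Finset.range N, cc n * ns lam₀ n := by
      apply monotone_nat_of_le_succ
      intro N
      rw [Finset.sum_range_succ]
      have := hterm lam₀ N
      linarith
    have hle : ∀ N, ∑ n ∈ Finset.range N, cc n * ns lam₀ n ≤ 0 :=
      fun N => hmono.ge_of_tendsto hS N
    have hzero : ∀ n, ns lam₀ n = 0 := by
      intro n
      have h1 : cc n * ns lam₀ n ≤ ∑ i ∈ Finset.range (n+1), cc i * ns lam₀ i :=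
        Finset.single_le_sum (fun i _ => hterm lam₀ i) (Finset.self_mem_range_succ n)
      have h2 := hle (n+1)
      have h3 : cc n * ns lam₀ n = 0 := le_antisymm (by linarith) (hterm lam₀ n)
      rcases mul_eq_zero.mp h3 with h | h
      · exact absurd h (hccpos n).ne'
      · exact h
    have hU0 : ∀ n, U lam₀ n = 0 := by
      intro n
      have h1 := hzero n
      have h2 := Complex.normSq_nonneg (U lam₀ n)
      have h3 := Complex.normSq_nonneg (V lam₀ n)
      simp only [hns] at h1
      exact Complex.normSq_eq_zero.mp (by linarith)
    have hV0 : ∀ n, V lam₀ n = 0 := by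
      intro n
      have h1 := hzero n
      have h2 := Complex.normSq_nonneg (U lam₀ n)
      have h3 := Complex.normSq_nonneg (V lam₀ n)
      simp only [hns] at h1
      exact Complex.normSq_eq_zero.mp (by linarith)
    have hk12 : (k₁₂:ℂ) = 0 := by
      have h1 : Tendsto (U lam₀) atTop (nhds (0:ℂ)) := by
        refine tendsto_const_nhds.congr fun n => (hU0 n).symm
      exact tendsto_nhds_unique (hUlim lam₀) h1
    have hk11 : (k₁₁:ℂ) = 0 := by
      have h1 : Tendsto (V lam₀) atTop (nhds (0:ℂ)) := by
        refine tendsto_const_nhds.congr fun n => (hV0 n).symm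
      have := tendsto_nhds_unique (hVlim lam₀) h1
      simpa [neg_eq_zero] using this
    refine hk1 ?_
    rw [Prod.mk.injEq]
    exact ⟨by exact_mod_cast hk11, by exact_mod_cast hk12⟩

/-- Lemma 3.3: every eigenvalue of the `q`-Dirac boundary value
problem is simple: if `λ₀` is a zero of the characteristic function
`Δ(λ) = k₂₁ φ₁(a,λ) + k₂₂ φ₂(aq⁻¹,λ)`, then `Δ'(λ₀) ≠ 0`. Here `φ(·,λ)` is the
solution of the system with `φ₁(0,λ) = k₁₂`, `φ₂(0,λ) = −k₁₁`, depending
differentiably on `λ` (Δ is entire). -/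
theorem qDirac_eigenvalues_simple (q a : ℝ) (hq0 : 0 < q) (hq1 : q < 1) (ha : 0 < a)
    (p r : ℝ → ℝ) (k₁₁ k₁₂ k₂₁ k₂₂ : ℝ)
    (hk1 : (k₁₁, k₁₂) ≠ (0, 0)) (hk2 : (k₂₁, k₂₂) ≠ (0, 0))
    (φ₁ φ₂ : ℂ → ℝ → ℂ)
    (hsol : ∀ lam : ℂ, SolvesQDirac q p r lam (φ₁ lam) (φ₂ lam) (qGeomSet q a))
    (hreg : ∀ lam : ℂ, QRegularAtZero q (φ₁ lam) ∧ QRegularAtZero q (φ₂ lam))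
    (hinit : ∀ lam : ℂ, φ₁ lam 0 = (k₁₂ : ℂ) ∧ φ₂ lam 0 = -(k₁₁ : ℂ))
    (hdiff : ∀ x : ℝ, Differentiable ℂ (fun lam => φ₁ lam x) ∧
      Differentiable ℂ (fun lam => φ₂ lam x)) :
    ∀ lam₀ : ℂ,
      (k₂₁ : ℂ) * φ₁ lam₀ a + (k₂₂ : ℂ) * φ₂ lam₀ (a / q) = 0 →
      deriv (fun lam : ℂ => (k₂₁ : ℂ) * φ₁ lam a + (k₂₂ : ℂ) * φ₂ lam (a / q)) lam₀ ≠ 0 := by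
  intro lam₀ hΔ0 hd
  have hmem : ∀ n : ℕ, a * q ^ n ∈ qGeomSet q a := fun n => Or.inl ⟨n, rfl⟩
  have haC : ((a:ℝ):ℂ) ≠ 0 := by exact_mod_cast ha.ne'
  have hqC : (q:ℂ) ≠ 0 := by exact_mod_cast hq0.ne'
  have hq1C : (q:ℂ) - 1 ≠ 0 := by rw [sub_ne_zero]; exact_mod_cast hq1.ne
  have h1qC : (1:ℂ) - (q:ℂ) ≠ 0 := by
    rw [sub_ne_zero]; exact fun h => hq1C (by rw [← h]; ring)
  have hrec1 : ∀ (lam : ℂ) (n : ℕ), φ₂ lam (a*q^n/q) = φ₂ lam (a*q^n)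
      - ((a*q^n*(1-q) : ℝ) : ℂ) * (lam - ((p (a*q^n) : ℝ):ℂ)) * φ₁ lam (a*q^n) := by
    intro lam n
    have e1 := (hsol lam (a*q^n) (hmem n)).1
    have hx : a*q^n ≠ 0 := by positivity
    rw [qDqInv, if_neg hx] at e1
    push_cast at e1 ⊢
    field_simp [hqC, haC, hq1C] at e1
    have e1' : φ₂ lam (a*q^n/q) - φ₂ lam (a*q^n)
        + ((p (a*q^n):ℝ):ℂ) * φ₁ lam (a*q^n) * ((a:ℂ)*(q:ℂ)^n*((q:ℂ)-1))
        = lam * φ₁ lam (a*q^n) * ((a:ℂ)*(q:ℂ)^n*((q:ℂ)-1)) := by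
      apply mul_left_cancel₀ hqC
      linear_combination (q:ℂ) * e1
    linear_combination e1'
  have hrec2 : ∀ (lam : ℂ) (n : ℕ), φ₁ lam (a*q^(n+1)) = φ₁ lam (a*q^n)
      - ((a*q^n*(1-q) : ℝ) : ℂ) * (lam - ((r (a*q^n) : ℝ):ℂ)) * φ₂ lam (a*q^n) := by
    intro lam n
    have e2 := (hsol lam (a*q^n) (hmem n)).2
    have hx : a*q^n ≠ 0 := by positivity
    rw [qDq, if_neg hx] at e2
    have hqx : q * (a*q^n) = a*q^(n+1) := by ring
    rw [hqx] at e2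
    push_cast at e2 ⊢
    field_simp [hqC, haC, hq1C, h1qC] at e2
    linear_combination (-1:ℂ) * e2
  have hWV : ∀ (lam : ℂ) (n : ℕ), φ₂ lam (a*q^(n+1)/q) = φ₂ lam (a*q^n) := by
    intro lam n
    have hx : a * q^(n+1)/q = a*q^n := by
      field_simp
      ring
    rw [hx]
  have hΔdiff : DifferentiableAt ℂ
      (fun lam : ℂ => (k₂₁ : ℂ) * φ₁ lam a + (k₂₂ : ℂ) * φ₂ lam (a / q)) lam₀ :=
    (((hdiff a).1.const_mul ((k₂₁:ℂ))).add ((hdiff (a/q)).2.const_mul ((k₂₂:ℂ)))).differentiableAt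
  exact qds_core k₁₁ k₁₂ k₂₁ k₂₂ hk1 hk2
    (fun lam n => φ₁ lam (a*q^n)) (fun lam n => φ₂ lam (a*q^n)) (fun lam n => φ₂ lam (a*q^n/q))
    (fun n => a*q^n*(1-q)) (fun n => p (a*q^n)) (fun n => r (a*q^n))
    (fun n => mul_pos (by positivity) (by linarith))
    hrec1 hrec2 hWV
    (fun lam => by have h := (hreg lam).1 a; rwa [(hinit lam).1] at h)
    (fun lam => by have h := (hreg lam).2 a; rwa [(hinit lam).2] at h)
    (fun n => (hdiff _).1.continuous)
    (fun n => (hdiff _).2.continuous)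
    (fun n => (hdiff _).2.continuous)
    (fun lam => (k₂₁:ℂ) * φ₁ lam a + (k₂₂:ℂ) * φ₂ lam (a/q))
    (fun lam => by norm_num)
    lam₀ hΔdiff hΔ0 hd
end
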